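/- arXiv:1711.04145 — 8 statements merged into one kernel-verified Lean document; each statement's English description precedes it below -/
import Mathlib

section
/- Let V be a linear subspace of R^d, A an arbitrary nonempty subset of V, and Y a point in R^d. If θ̂_A minimizes ‖Y − x‖ over x ∈ A and θ̂_V minimizes ‖Y − x‖ over x ∈ V (Euclidean norm), then for every θ ∈ A one has ‖θ̂_A − θ‖² ≤ 4‖θ̂_V − θ‖². -/
/-!
Since `θV` is a best approximation of `Y` in the subspace `V`, the residual `Y - θV` is
orthogonal to `V`, so by Pythagoras `‖Y - x‖² = ‖Y - θV‖² + ‖θV - x‖²` for every `x ∈ V`.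
Hence on `A ⊆ V` minimizing the distance to `Y` is the same as minimizing the distance to `θV`,
giving `‖θV - θA‖ ≤ ‖θV - θ‖`, and the triangle inequality through `θV` yields
`‖θA - θ‖ ≤ 2 ‖θV - θ‖`.
-/

open scoped RealInnerProductSpace

section

variable {E : Type*} [NormedAddCommGroup E] [InnerProductSpace ℝ E]

theorem inner_sub_eq_zero_of_forall_norm_sub_le (K : Submodule ℝ E) {y v : E} (hv : v ∈ K)
    (hmin : ∀ x ∈ K, ‖y - v‖ ≤ ‖y - x‖) : ∀ w ∈ K, ⟪y - v, w⟫ = 0 := by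
  refine (K.norm_eq_iInf_iff_real_inner_eq_zero hv).mp (le_antisymm ?_ ?_)
  · exact le_ciInf fun w => hmin w w.2
  · exact ciInf_le ⟨0, by rintro _ ⟨w, rfl⟩; positivity⟩ (⟨v, hv⟩ : K)

theorem norm_sub_sq_eq_of_forall_norm_sub_le (K : Submodule ℝ E) {y v x : E} (hv : v ∈ K)
    (hmin : ∀ x ∈ K, ‖y - v‖ ≤ ‖y - x‖) (hx : x ∈ K) :
    ‖y - x‖ ^ 2 = ‖y - v‖ ^ 2 + ‖v - x‖ ^ 2 := by
  have horth : ⟪y - v, v - x⟫ = 0 :=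
    inner_sub_eq_zero_of_forall_norm_sub_le K hv hmin _ (K.sub_mem hv hx)
  rw [← sub_add_sub_cancel y v x, norm_add_sq_real, horth]
  ring

theorem norm_sub_le_of_subset_of_forall_norm_sub_le (K : Submodule ℝ E) {A : Set E}
    (hAK : A ⊆ K) {y v a : E} (hv : v ∈ K) (hminK : ∀ x ∈ K, ‖y - v‖ ≤ ‖y - x‖) (ha : a ∈ A)
    (hminA : ∀ x ∈ A, ‖y - a‖ ≤ ‖y - x‖) {x : E} (hx : x ∈ A) : ‖v - a‖ ≤ ‖v - x‖ := by
  have hsq : ‖v - a‖ ^ 2 ≤ ‖v - x‖ ^ 2 := by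
    have hpa := norm_sub_sq_eq_of_forall_norm_sub_le K hv hminK (hAK ha)
    have hpx := norm_sub_sq_eq_of_forall_norm_sub_le K hv hminK (hAK hx)
    have := pow_le_pow_left₀ (norm_nonneg _) (hminA x hx) 2
    linarith
  exact (pow_le_pow_iff_left₀ (norm_nonneg _) (norm_nonneg _) two_ne_zero).mp hsq

end

theorem norm_sub_le_two_mul_of_norm_sub_le {G : Type*} [SeminormedAddCommGroup G] {v a x : G}
    (h : ‖v - a‖ ≤ ‖v - x‖) : ‖a - x‖ ≤ 2 * ‖v - x‖ :=
  calc ‖a - x‖ ≤ ‖a - v‖ + ‖v - x‖ := norm_sub_le_norm_sub_add_norm_sub _ _ _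
    _ = ‖v - a‖ + ‖v - x‖ := by rw [norm_sub_rev]
    _ ≤ 2 * ‖v - x‖ := by linarith

/-- Let `V` be a linear subspace of `ℝ^d`, `A ⊆ V` a nonempty subset and
`Y ∈ ℝ^d`. If `θA` minimizes `‖Y - x‖` over `x ∈ A` and `θV` minimizes `‖Y - x‖` over
`x ∈ V`, then for every `θ ∈ A` one has `‖θA - θ‖² ≤ 4‖θV - θ‖²`. -/
theorem stmt0 {d : ℕ} (V : Submodule ℝ (EuclideanSpace ℝ (Fin d)))
    (A : Set (EuclideanSpace ℝ (Fin d))) (hAV : A ⊆ (V : Set (EuclideanSpace ℝ (Fin d))))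
    (Y θA θV : EuclideanSpace ℝ (Fin d))
    (hθA : θA ∈ A) (hminA : ∀ x ∈ A, ‖Y - θA‖ ≤ ‖Y - x‖)
    (hθV : θV ∈ V) (hminV : ∀ x ∈ (V : Set (EuclideanSpace ℝ (Fin d))), ‖Y - θV‖ ≤ ‖Y - x‖)
    (θ : EuclideanSpace ℝ (Fin d)) (hθ : θ ∈ A) :
    ‖θA - θ‖ ^ 2 ≤ 4 * ‖θV - θ‖ ^ 2 := by
  have hclose : ‖θV - θA‖ ≤ ‖θV - θ‖ :=
    norm_sub_le_of_subset_of_forall_norm_sub_le V hAV hθV hminV hθA hminA hθ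
  calc ‖θA - θ‖ ^ 2 ≤ (2 * ‖θV - θ‖) ^ 2 :=
        pow_le_pow_left₀ (norm_nonneg _) (norm_sub_le_two_mul_of_norm_sub_le hclose) 2
    _ = 4 * ‖θV - θ‖ ^ 2 := by ring
end

section
/- Fix an alphabet 𝔄 = {0, 1, a_3, …, a_k} with 1 < a_3 < … < a_k, and m, M ∈ N. Define Ω_{m,M} as the set of ω ∈ R_{≥0}^{m×M} with strictly increasing row norms 0 < ‖ω_{1·}‖ < … < ‖ω_{m·}‖ and columns summing to one; define ASB(ω) = min_{e≠e'∈𝔄^m} ‖eω − e'ω‖/√M and WSB(ω) = ((1+m·a_k)/(2√M)) · min_{2≤i≤m}(‖ω_{i·}‖ − ‖ω_{(i−1)·}‖). If there exists ω ∈ Ω_{m,M} with min(ASB(ω), WSB(ω)) ≥ δ, then δ ≤ (1 + m·a_k)/√(2m(m+1)). -/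
open Finset Real

namespace MABS

/-- Euclidean norm of a vector in `ℝ^M`. -/
noncomputable def vnorm {M : ℕ} (v : Fin M → ℝ) : ℝ := Real.sqrt (∑ j, (v j) ^ 2)

/-- Euclidean norm of the `i`-th row of the mixing matrix `ω`. -/
noncomputable def rowNorm {m M : ℕ} (ω : Fin m → Fin M → ℝ) (i : Fin m) : ℝ := vnorm (ω i)

/-- `e` has all its entries in the alphabet `𝔄`. -/
def inAlph (𝔄 : Finset ℝ) {m : ℕ} (e : Fin m → ℝ) : Prop := ∀ i, e i ∈ 𝔄

/-- The mixture `e ω ∈ ℝ^M` of the rows of `ω` with coefficients `e`. -/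
noncomputable def mix {m M : ℕ} (e : Fin m → ℝ) (ω : Fin m → Fin M → ℝ) : Fin M → ℝ :=
  fun j => ∑ i, e i * ω i j

/-- Alphabet separation boundary `ASB(ω) = min_{e ≠ e' ∈ 𝔄^m} ‖eω - e'ω‖ / √M`. -/
noncomputable def ASB (𝔄 : Finset ℝ) {m M : ℕ} (ω : Fin m → Fin M → ℝ) : ℝ :=
  sInf {x : ℝ | ∃ e e' : Fin m → ℝ, inAlph 𝔄 e ∧ inAlph 𝔄 e' ∧ e ≠ e' ∧
    x = vnorm (mix e ω - mix e' ω) / Real.sqrt (M : ℝ)}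

/-- `WSB(ω) ≥ δ`, i.e. every consecutive row-norm gap is at least `2δ√M/(1+m·a_k)`. -/
def WSBge (ak δ : ℝ) {m M : ℕ} (ω : Fin m → Fin M → ℝ) : Prop :=
  ∀ i j : Fin m, (j : ℕ) = (i : ℕ) + 1 →
    δ ≤ ((1 + (m : ℝ) * ak) / (2 * Real.sqrt (M : ℝ))) * (rowNorm ω j - rowNorm ω i)

/-- Weights separation boundary as a real number. -/
noncomputable def WSBval (ak : ℝ) {m M : ℕ} (ω : Fin m → Fin M → ℝ) : ℝ :=
  ((1 + (m : ℝ) * ak) / (2 * Real.sqrt (M : ℝ))) *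
    sInf {x : ℝ | ∃ i j : Fin m, (j : ℕ) = (i : ℕ) + 1 ∧ x = rowNorm ω j - rowNorm ω i}

/-- `ω ∈ Ω_{m,M}`: nonnegative entries, columns summing to one, strictly increasing
positive row norms. -/
def Omega {m M : ℕ} (ω : Fin m → Fin M → ℝ) : Prop :=
  (∀ i j, 0 ≤ ω i j) ∧ (∀ j, ∑ i, ω i j = 1) ∧
    (∀ i, 0 < rowNorm ω i) ∧ StrictMono (rowNorm ω)

/-- The alphabet `𝔄 = {0, 1, a₃, …, a_k}` with `1 < a₃ < … < a_k`: it contains `0` and `1`,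
`ak` is its maximal element, and every nonzero element is at least `1`. -/
def AlphOK (𝔄 : Finset ℝ) (ak : ℝ) : Prop :=
  (0 : ℝ) ∈ 𝔄 ∧ (1 : ℝ) ∈ 𝔄 ∧ ak ∈ 𝔄 ∧ (∀ x ∈ 𝔄, x ≤ ak) ∧ (∀ x ∈ 𝔄, x = 0 ∨ 1 ≤ x)

/-- `Δ𝔄_min`, the minimal distance between distinct alphabet values. -/
noncomputable def DeltaMin (𝔄 : Finset ℝ) : ℝ :=
  sInf {x : ℝ | ∃ a ∈ 𝔄, ∃ b ∈ 𝔄, a ≠ b ∧ x = |a - b|}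

/-- The `i`-th standard unit (row) vector in `ℝ^m`. -/
def unitRow {m : ℕ} (i : Fin m) : Fin m → ℝ := fun i' => if i' = i then 1 else 0

/-- `F = ΠA` is a separable finite-alphabet design: every row lies in `𝔄^m` and every
standard unit vector occurs among the rows. -/
def Separable (𝔄 : Finset ℝ) {n m : ℕ} (F : Fin n → Fin m → ℝ) : Prop :=
  (∀ j, inAlph 𝔄 (F j)) ∧ ∀ i : Fin m, ∃ j, F j = unitRow i

end MABS

/-- If there exists `ω ∈ Ω_{m,M}` with `min(ASB(ω), WSB(ω)) ≥ δ`, then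
`δ ≤ (1 + m·a_k) / √(2m(m+1))`. -/
theorem stmt5 {m M : ℕ} (hm : 0 < m) (hM : 0 < M) (𝔄 : Finset ℝ) (ak : ℝ)
    (hA : MABS.AlphOK 𝔄 ak) (δ : ℝ) (hδ : 0 < δ)
    (h : ∃ ω : Fin m → Fin M → ℝ, MABS.Omega ω ∧ δ ≤ MABS.ASB 𝔄 ω ∧ MABS.WSBge ak δ ω) :
    δ ≤ (1 + (m : ℝ) * ak) / Real.sqrt (2 * m * (m + 1)) := by
  obtain ⟨ω, ⟨hpos, hcol, hrn, hmono⟩, hASB, _⟩ := h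
  have hM0 : (0:ℝ) < (M:ℝ) := by exact_mod_cast hM
  have hm0 : (0:ℝ) < (m:ℝ) := by exact_mod_cast hm
  have hsqM : (0:ℝ) < Real.sqrt M := Real.sqrt_pos.2 hM0
  set i0 : Fin m := ⟨0, hm⟩ with hi0
  -- the ASB set is bounded below by 0
  have hbdd : BddBelow {x : ℝ | ∃ e e' : Fin m → ℝ, MABS.inAlph 𝔄 e ∧ MABS.inAlph 𝔄 e' ∧
      e ≠ e' ∧ x = MABS.vnorm (MABS.mix e ω - MABS.mix e' ω) / Real.sqrt (M : ℝ)} := by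
    refine ⟨0, ?_⟩
    rintro x ⟨e, e', _, _, _, rfl⟩
    have : 0 ≤ MABS.vnorm (MABS.mix e ω - MABS.mix e' ω) := Real.sqrt_nonneg _
    positivity
  have hmem : MABS.rowNorm ω i0 / Real.sqrt M ∈ {x : ℝ | ∃ e e' : Fin m → ℝ,
      MABS.inAlph 𝔄 e ∧ MABS.inAlph 𝔄 e' ∧ e ≠ e' ∧
      x = MABS.vnorm (MABS.mix e ω - MABS.mix e' ω) / Real.sqrt (M : ℝ)} := by
    refine ⟨MABS.unitRow i0, 0, ?_, ?_, ?_, ?_⟩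
    · intro i; unfold MABS.unitRow; split
      · exact hA.2.1
      · exact hA.1
    · intro i; simpa using hA.1
    · intro hcon
      have := congrFun hcon i0
      simp [MABS.unitRow] at this
    · have : MABS.mix (MABS.unitRow i0) ω - MABS.mix 0 ω = ω i0 := by
        funext j
        simp [MABS.mix, MABS.unitRow]
      rw [this]
      rfl
  have hkey : δ ≤ MABS.rowNorm ω i0 / Real.sqrt M := hASB.trans (csInf_le hbdd hmem)
  have hrow : ∀ i : Fin m, δ * Real.sqrt M ≤ MABS.rowNorm ω i := by
    intro i
    have h1 : δ * Real.sqrt M ≤ MABS.rowNorm ω i0 := (le_div_iff₀ hsqM).1 hkey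
    exact h1.trans (hmono.monotone (by simp [hi0, Fin.le_def]))
  -- each row norm squared equals sum of squares
  have hrowsq : ∀ i : Fin m, (MABS.rowNorm ω i)^2 = ∑ j, (ω i j)^2 := by
    intro i
    exact Real.sq_sqrt (Finset.sum_nonneg fun j _ => sq_nonneg _)
  have hle1 : ∀ i j, ω i j ≤ 1 := by
    intro i j
    calc ω i j ≤ ∑ i', ω i' j :=
          Finset.single_le_sum (fun i' _ => hpos i' j) (Finset.mem_univ i)
      _ = 1 := hcol j
  have hsum : ∑ i, ∑ j, (ω i j)^2 ≤ (M:ℝ) := by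
    calc ∑ i, ∑ j, (ω i j)^2 ≤ ∑ i : Fin m, ∑ j, ω i j := by
          refine Finset.sum_le_sum fun i _ => Finset.sum_le_sum fun j _ => ?_
          nlinarith [hpos i j, hle1 i j]
      _ = ∑ j : Fin M, ∑ i, ω i j := Finset.sum_comm
      _ = ∑ j : Fin M, (1:ℝ) := by simp [hcol]
      _ = (M:ℝ) := by simp
  have hlow : (m:ℝ) * (δ * Real.sqrt M)^2 ≤ ∑ i, ∑ j, (ω i j)^2 := by
    calc (m:ℝ) * (δ * Real.sqrt M)^2 = ∑ _i : Fin m, (δ * Real.sqrt M)^2 := by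
          simp [mul_comm]
      _ ≤ ∑ i, ∑ j, (ω i j)^2 := by
          refine Finset.sum_le_sum fun i _ => ?_
          rw [← hrowsq i]
          have h0 : 0 ≤ δ * Real.sqrt M := by positivity
          exact pow_le_pow_left₀ h0 (hrow i) 2
  have hsqMval : (Real.sqrt M)^2 = (M:ℝ) := Real.sq_sqrt hM0.le
  have hδ2 : (m:ℝ) * δ^2 ≤ 1 := by
    have := hlow.trans hsum
    rw [mul_pow, hsqMval] at this
    nlinarith
  -- finish
  have hak : 1 ≤ ak := hA.2.2.2.1 1 hA.2.1
  have hs : (m:ℝ) + 1 ≤ 1 + (m:ℝ) * ak := by nlinarith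
  have hD : (0:ℝ) < 2 * (m:ℝ) * ((m:ℝ) + 1) := by positivity
  have hsqD : (0:ℝ) < Real.sqrt (2 * (m:ℝ) * ((m:ℝ) + 1)) := Real.sqrt_pos.2 hD
  rw [le_div_iff₀ hsqD]
  have hx0 : 0 ≤ δ * Real.sqrt (2 * (m:ℝ) * ((m:ℝ) + 1)) := by positivity
  have hs0 : (0:ℝ) ≤ 1 + (m:ℝ) * ak := by nlinarith
  have hm1 : (1:ℝ) ≤ (m:ℝ) := by exact_mod_cast hm
  have h1 := mul_le_mul_of_nonneg_left hδ2 (by positivity : (0:ℝ) ≤ 2*((m:ℝ)+1))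
  have hx2 : (δ * Real.sqrt (2 * (m:ℝ) * ((m:ℝ) + 1)))^2 ≤ (1 + (m:ℝ) * ak)^2 := by
    rw [mul_pow, Real.sq_sqrt hD.le]
    nlinarith [h1, hs, hm1, mul_le_mul hs hs (by linarith : (0:ℝ) ≤ (m:ℝ)+1) hs0]
  nlinarith [hx2, hx0, hs0]
end

section
/- Let 𝔄 = {0, 1, a_3, …, a_k} with 1 < a_3 < … < a_k, m ∈ N, and Δ𝔄_min = min_{a≠a'∈𝔄}|a−a'|. Then the set Ω_{m,m}^{δ} of m×m mixing matrices ω (nonnegative entries, columns summing to one, strictly increasing row norms) with min(ASB(ω), WSB(ω)) ≥ δ is non-empty for δ = 0.2·Δ𝔄_min/√m. In particular, the matrix ω^δ = I_{m×m} − (2δ√m/(1+m·a_k))·N, where N has N_{ii} = m−i for i < m, N_{mi} = −(m−i) for i < m, and zeros elsewhere, witnesses this. -/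
open Finset Real

/-!
Write `m = n + 1` and `c = 2δ√m / (1 + m a_k) = 0.4 Δ / (1 + m a_k)`, so that `c n ≤ 2/5`.
Row `k < n` of `ω^δ = I - c N` is `(1 - c (n - k)) e_k`, and the last row is `e_n` plus the
amounts `c (n - k)` taken off the diagonal. Hence the columns sum to one, and the row norms
`1 - c n < 1 - c (n - 1) < ⋯ < 1 - c ≤ 1 ≤ ‖ω_n‖` grow by at least `c` at each step, which is
exactly `WSB ≥ δ`. For `ASB`, the last column of `ω^δ` is `e_n` and column `k < n` meets only
rows `k` and `n`. So if `e ≠ e'` differ in the last coordinate, that coordinate of `(e - e') ω^δ`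
is `e_n - e'_n`; otherwise, for some `k` with `e_k ≠ e'_k`, its `k`-th coordinate is
`(e_k - e'_k)(1 - c (n - k))`. Either way `‖(e - e') ω^δ‖ ≥ (3/5) Δ ≥ 0.2 Δ`.
-/

namespace MABS

variable {𝔄 : Finset ℝ}

lemma DeltaMin_le {a b : ℝ} (ha : a ∈ 𝔄) (hb : b ∈ 𝔄) (hab : a ≠ b) :
    DeltaMin 𝔄 ≤ |a - b| :=
  csInf_le ⟨0, by rintro x ⟨a, -, b, -, -, rfl⟩; positivity⟩ ⟨a, ha, b, hb, hab, rfl⟩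

lemma DeltaMin_pos {a b : ℝ} (ha : a ∈ 𝔄) (hb : b ∈ 𝔄) (hab : a ≠ b) : 0 < DeltaMin 𝔄 := by
  have hfin : {x : ℝ | ∃ a ∈ 𝔄, ∃ b ∈ 𝔄, a ≠ b ∧ x = |a - b|}.Finite :=
    ((𝔄 ×ˢ 𝔄).image fun p => |p.1 - p.2|).finite_toSet.subset <| by
      rintro x ⟨a, ha, b, hb, -, rfl⟩
      exact Finset.mem_image.mpr ⟨(a, b), Finset.mem_product.mpr ⟨ha, hb⟩, rfl⟩
  obtain ⟨a', -, b', -, hab', hmin⟩ :=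
    Set.Nonempty.csInf_mem (by exact ⟨_, a, ha, b, hb, hab, rfl⟩) hfin
  rw [DeltaMin, hmin]
  exact abs_sub_pos.mpr hab'

lemma abs_apply_le_vnorm {M : ℕ} (v : Fin M → ℝ) (j : Fin M) : |v j| ≤ vnorm v := by
  rw [vnorm, ← Real.sqrt_sq_eq_abs]
  exact Real.sqrt_le_sqrt (Finset.single_le_sum (fun i _ => sq_nonneg (v i)) (Finset.mem_univ j))

lemma vnorm_single {M : ℕ} (j : Fin M) (a : ℝ) : vnorm (Pi.single j a) = |a| := by
  rw [vnorm, ← Real.sqrt_sq_eq_abs]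
  congr 1
  rw [Finset.sum_eq_single j (fun i _ hi => by simp [hi]) (by simp)]
  simp

lemma mix_sub {m M : ℕ} (e e' : Fin m → ℝ) (ω : Fin m → Fin M → ℝ) :
    mix e ω - mix e' ω = mix (e - e') ω := by
  ext j
  simp only [mix, Pi.sub_apply, sub_mul, Finset.sum_sub_distrib]

lemma le_ASB {m M : ℕ} [Nonempty (Fin m)] {ω : Fin m → Fin M → ℝ} {δ a b : ℝ}
    (ha : a ∈ 𝔄) (hb : b ∈ 𝔄) (hab : a ≠ b)
    (h : ∀ e e', inAlph 𝔄 e → inAlph 𝔄 e' → e ≠ e' →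
      δ ≤ vnorm (mix e ω - mix e' ω) / Real.sqrt M) :
    δ ≤ ASB 𝔄 ω := by
  refine le_csInf ⟨_, fun _ => a, fun _ => b, fun _ => ha, fun _ => hb, ?_, rfl⟩ ?_
  · exact fun h => hab (Function.const_inj.mp h)
  · rintro x ⟨e, e', he, he', hne, rfl⟩
    exact h e e' he he' hne

/-- The paper's `N` in 0-based indexing: paper row `i` is row `i - 1` here, so `m - i` reads
`m - 1 - i`. -/
def gapMatrix (m : ℕ) : Fin m → Fin m → ℝ := fun i j =>
  if (i : ℕ) = (j : ℕ) ∧ (j : ℕ) < m - 1 then (m : ℝ) - 1 - ((j : ℕ) : ℝ)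
  else if (i : ℕ) = m - 1 ∧ (j : ℕ) < m - 1 then -((m : ℝ) - 1 - ((j : ℕ) : ℝ))
  else 0

def perturbedIdentity (m : ℕ) (c : ℝ) : Fin m → Fin m → ℝ := fun i j =>
  (if i = j then 1 else 0) - c * gapMatrix m i j

section PerturbedIdentity

open Fin

variable {n : ℕ} {c : ℝ}

lemma perturbedIdentity_castSucc (k : Fin n) :
    perturbedIdentity (n + 1) c k.castSucc = Pi.single k.castSucc (1 - c * (n - k)) := by
  ext j
  rcases eq_or_ne (j : ℕ) k with h | h
  · simp [perturbedIdentity, gapMatrix, Pi.single_apply, Fin.ext_iff, h]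
  · simp [perturbedIdentity, gapMatrix, Fin.ext_iff, h, Ne.symm h, k.isLt.ne]

lemma perturbedIdentity_last_castSucc (k : Fin n) :
    perturbedIdentity (n + 1) c (last n) k.castSucc = c * (n - k) := by
  simp [perturbedIdentity, gapMatrix, Fin.ext_iff, k.isLt.ne']
  ring

lemma perturbedIdentity_apply_last (i : Fin (n + 1)) :
    perturbedIdentity (n + 1) c i (last n) = if i = last n then 1 else 0 := by
  simp [perturbedIdentity, gapMatrix, eq_comm]

lemma rowNorm_perturbedIdentity_castSucc (hc : 0 ≤ c) (hcn : c * n ≤ 1) (k : Fin n) :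
    rowNorm (perturbedIdentity (n + 1) c) k.castSucc = 1 - c * (n - k) := by
  have hk : c * (n - k) ≤ c * n := by nlinarith [(k : ℕ).cast_nonneg (α := ℝ)]
  rw [rowNorm, perturbedIdentity_castSucc, vnorm_single, abs_of_nonneg (by linarith)]

lemma one_sub_le_rowNorm_perturbedIdentity (i : Fin (n + 1)) :
    1 - c * (n - i) ≤ rowNorm (perturbedIdentity (n + 1) c) i := by
  cases i using Fin.lastCases with
  | last =>
    simpa [rowNorm, perturbedIdentity_apply_last] using
      abs_apply_le_vnorm (perturbedIdentity (n + 1) c (last n)) (last n)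
  | cast k =>
    rw [rowNorm, perturbedIdentity_castSucc, vnorm_single]
    exact le_abs_self _

lemma le_rowNorm_sub_rowNorm_perturbedIdentity (hc : 0 ≤ c) (hcn : c * n ≤ 1)
    {i j : Fin (n + 1)} (hij : (j : ℕ) = i + 1) :
    c ≤ rowNorm (perturbedIdentity (n + 1) c) j - rowNorm (perturbedIdentity (n + 1) c) i := by
  obtain ⟨k, rfl⟩ : ∃ k : Fin n, k.castSucc = i := ⟨⟨i, by omega⟩, rfl⟩
  have hj := one_sub_le_rowNorm_perturbedIdentity (c := c) j
  rw [hij, Fin.val_castSucc] at hj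
  push_cast at hj
  rw [rowNorm_perturbedIdentity_castSucc hc hcn k]
  linarith

lemma omega_perturbedIdentity (hc : 0 < c) (hcn : c * n < 1) :
    Omega (perturbedIdentity (n + 1) c) := by
  have hd : ∀ i : Fin (n + 1), 0 ≤ c * (n - i) := fun i =>
    mul_nonneg hc.le (sub_nonneg.mpr (by exact_mod_cast Nat.lt_succ_iff.mp i.isLt))
  have hd1 : ∀ i : Fin (n + 1), c * (n - i) < 1 := fun i => by
    nlinarith [(i : ℕ).cast_nonneg (α := ℝ)]
  refine ⟨fun i j => ?_, fun j => ?_, fun i => ?_, Fin.strictMono_iff_lt_succ.mpr fun k => ?_⟩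
  · cases i using Fin.lastCases with
    | last =>
      cases j using Fin.lastCases with
      | last => simp [perturbedIdentity_apply_last]
      | cast k => simpa [perturbedIdentity_last_castSucc] using hd k.castSucc
    | cast k =>
      rw [perturbedIdentity_castSucc]
      exact Pi.single_nonneg (α := fun _ => ℝ).mpr (sub_nonneg.mpr (by simpa using (hd1 k.castSucc).le)) j
  · rw [Fin.sum_univ_castSucc]
    cases j using Fin.lastCases with
    | last => simp [perturbedIdentity_apply_last]
    | cast k => simp [perturbedIdentity_castSucc, perturbedIdentity_last_castSucc, Pi.single_apply]
  · linarith [one_sub_le_rowNorm_perturbedIdentity (c := c) i, hd1 i]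
  · linarith [le_rowNorm_sub_rowNorm_perturbedIdentity hc.le hcn.le (i := k.castSucc) (j := k.succ)
      (by simp)]

lemma mix_perturbedIdentity_last (v : Fin (n + 1) → ℝ) :
    mix v (perturbedIdentity (n + 1) c) (last n) = v (last n) := by
  simp [mix, perturbedIdentity_apply_last]

lemma mix_perturbedIdentity_castSucc (v : Fin (n + 1) → ℝ) (k : Fin n) :
    mix v (perturbedIdentity (n + 1) c) k.castSucc =
      v k.castSucc * (1 - c * (n - k)) + v (last n) * (c * (n - k)) := by
  simp [mix, Fin.sum_univ_castSucc, perturbedIdentity_castSucc, perturbedIdentity_last_castSucc,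
    Pi.single_apply]

lemma le_vnorm_mix_perturbedIdentity {Δ : ℝ} (hc : 0 ≤ c) (hcn : c * n ≤ 1) (hΔ : 0 ≤ Δ)
    {v : Fin (n + 1) → ℝ} (hv : ∀ i, v i ≠ 0 → Δ ≤ |v i|) (hv0 : v ≠ 0) :
    (1 - c * n) * Δ ≤ vnorm (mix v (perturbedIdentity (n + 1) c)) := by
  by_cases hlast : v (last n) = 0
  · obtain ⟨i, hi⟩ := Function.ne_iff.mp hv0
    obtain ⟨k, rfl⟩ : ∃ k : Fin n, k.castSucc = i :=
      Fin.exists_castSucc_eq.mpr fun h => hi (h ▸ hlast)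
    have hk : c * (n - k) ≤ c * n := by nlinarith [(k : ℕ).cast_nonneg (α := ℝ)]
    calc (1 - c * n) * Δ ≤ (1 - c * (n - k)) * |v k.castSucc| :=
          mul_le_mul (by linarith) (hv _ hi) hΔ (by linarith)
      _ = |mix v (perturbedIdentity (n + 1) c) k.castSucc| := by
          rw [mix_perturbedIdentity_castSucc, hlast, zero_mul, add_zero, abs_mul,
            abs_of_nonneg (a := 1 - _) (by linarith), mul_comm]
      _ ≤ _ := abs_apply_le_vnorm _ _
  · calc (1 - c * n) * Δ ≤ Δ := by
          nlinarith [mul_nonneg (mul_nonneg hc (n.cast_nonneg (α := ℝ))) hΔ]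
      _ ≤ |mix v (perturbedIdentity (n + 1) c) (last n)| := by
          rw [mix_perturbedIdentity_last]; exact hv _ hlast
      _ ≤ _ := abs_apply_le_vnorm _ _

end PerturbedIdentity

end MABS

/-- For `δ = 0.2·Δ𝔄_min/√m`, the explicit matrix
`ω^δ = I_{m×m} - (2δ√m/(1+m·a_k))·N` (with `N` having diagonal entries `m-i` for `i < m`,
last-row entries `-(m-i)` for `i < m`, zeros elsewhere) lies in `Ω_{m,m}` and satisfies
`ASB(ω^δ) ≥ δ` and `WSB(ω^δ) ≥ δ`; in particular `Ω_{m,m}^δ` is non-empty. -/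
theorem stmt6 {m : ℕ} (hm : 0 < m) (𝔄 : Finset ℝ) (ak : ℝ) (hA : MABS.AlphOK 𝔄 ak) :
    let δ : ℝ := 0.2 * MABS.DeltaMin 𝔄 / Real.sqrt (m : ℝ)
    let c : ℝ := 2 * δ * Real.sqrt (m : ℝ) / (1 + (m : ℝ) * ak)
    let N : Fin m → Fin m → ℝ := fun i j =>
      if (i : ℕ) = (j : ℕ) ∧ (j : ℕ) < m - 1 then (m : ℝ) - 1 - ((j : ℕ) : ℝ)
      else if (i : ℕ) = m - 1 ∧ (j : ℕ) < m - 1 then -((m : ℝ) - 1 - ((j : ℕ) : ℝ))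
      else 0
    let ω : Fin m → Fin m → ℝ := fun i j => (if i = j then 1 else 0) - c * N i j
    MABS.Omega ω ∧ δ ≤ MABS.ASB 𝔄 ω ∧ MABS.WSBge ak δ ω := by
  intro δ c N ω
  change MABS.Omega (MABS.perturbedIdentity m c) ∧ δ ≤ MABS.ASB 𝔄 (MABS.perturbedIdentity m c) ∧
    MABS.WSBge ak δ (MABS.perturbedIdentity m c)
  obtain ⟨h0, h1, -, hmax, -⟩ := hA
  obtain ⟨n, rfl⟩ : ∃ n, m = n + 1 := ⟨m - 1, by omega⟩
  have hΔ : 0 < MABS.DeltaMin 𝔄 := MABS.DeltaMin_pos h0 h1 zero_ne_one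
  have hΔ1 : MABS.DeltaMin 𝔄 ≤ 1 := by simpa using MABS.DeltaMin_le h1 h0 one_ne_zero
  have hak : 1 ≤ ak := hmax 1 h1
  have hsqrt : 0 < Real.sqrt ((n + 1 : ℕ) : ℝ) := Real.sqrt_pos.mpr (by positivity)
  have hden : 0 < 1 + ((n + 1 : ℕ) : ℝ) * ak := by positivity
  have hc : c = 2 / 5 * MABS.DeltaMin 𝔄 / (1 + ((n + 1 : ℕ) : ℝ) * ak) := by
    simp only [c, δ]; field_simp; norm_num
  have hc0 : 0 < c := by rw [hc]; positivity
  have hcn : c * n ≤ 2 / 5 := by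
    rw [hc, div_mul_eq_mul_div, div_le_iff₀ hden]; push_cast
    nlinarith [mul_le_mul_of_nonneg_left hΔ1 (n.cast_nonneg (α := ℝ))]
  refine ⟨MABS.omega_perturbedIdentity hc0 (by linarith), ?_, fun i j hij => ?_⟩
  · refine MABS.le_ASB h0 h1 zero_ne_one fun e e' he he' hne => ?_
    rw [MABS.mix_sub]
    have hmix := MABS.le_vnorm_mix_perturbedIdentity hc0.le (by linarith) hΔ.le
      (v := e - e') (fun i hi => MABS.DeltaMin_le (he i) (he' i) (sub_ne_zero.mp hi))
      (sub_ne_zero.mpr hne)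
    exact div_le_div_of_nonneg_right (by norm_num; nlinarith) hsqrt.le
  · have hcδ : δ = (1 + ((n + 1 : ℕ) : ℝ) * ak) / (2 * Real.sqrt ((n + 1 : ℕ) : ℝ)) * c := by
      simp only [c]; field_simp
    rw [hcδ]
    exact mul_le_mul_of_nonneg_left
      (MABS.le_rowNorm_sub_rowNorm_perturbedIdentity hc0.le (by linarith) hij) (by positivity)
end

section
/- With the notation of the MABS model: if Ω_{m,m}^{δ'} is non-empty for δ' = 0.2·Δ𝔄_min/√m, then for any M ≥ m the set Ω_{m,M}^{δ} is non-empty with δ = 0.2·Δ𝔄_min·√⌊M/m⌋/√M. Concretely, if ω' ∈ Ω_{m,m}^{δ'}, then ω = (ω', …, ω' (⌊M/m⌋ copies), e^m, …, e^m) ∈ Ω_{m,M} satisfies ASB(ω) ≥ δ and WSB(ω) ≥ δ. -/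
open Finset Real

/-! Squared row norms of `ω` and squared distances `‖eω - e'ω‖²` are sums over its columns, so
each equals `q = ⌊M/m⌋` times the corresponding quantity for `ω'` plus a nonnegative contribution
of the trailing columns `e^m`. Taking square roots, all of them grow at least by the factor `√q`,
and since `e^m` vanishes off the last row, so do the gaps between consecutive row norms below the
last one. Normalising by `√M` instead of `√m` turns the bound `δ'` into `δ`. -/

theorem Function.Periodic.sum_range_mul {α : Type*} [AddCommMonoid α] {F : ℕ → α} {N : ℕ}
    (hF : Function.Periodic F N) (q : ℕ) :
    ∑ j ∈ range (q * N), F j = q • ∑ j ∈ range N, F j := by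
  induction q with
  | zero => simp
  | succ q ih =>
    rw [Nat.succ_mul, sum_range_add, ih, succ_nsmul]
    congr 1
    refine sum_congr rfl fun j _ => ?_
    rw [add_comm]
    exact hF.nsmul q j

theorem Fin.sum_ite_lt_mul_mod {N M q : ℕ} (hN : 0 < N) (hqN : q * N ≤ M) (f : Fin N → ℝ)
    (g : ℝ) :
    ∑ j : Fin M, (if (j : ℕ) < q * N then f ⟨(j : ℕ) % N, Nat.mod_lt _ hN⟩ else g) =
      q * ∑ j, f j + ((M : ℝ) - q * N) * g := by
  set F : ℕ → ℝ := fun j => f ⟨j % N, Nat.mod_lt _ hN⟩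
  have hF : Function.Periodic F N := fun j => by simp only [F, Nat.add_mod_right]
  have hF_sum : ∑ j ∈ range N, F j = ∑ j, f j := by
    rw [← Fin.sum_univ_eq_sum_range]
    exact sum_congr rfl fun j _ => by simp only [F, Nat.mod_eq_of_lt j.isLt]
  rw [Fin.sum_univ_eq_sum_range (fun j => if j < q * N then F j else g),
    ← sum_range_add_sum_Ico _ hqN,
    sum_congr rfl fun j hj => if_pos (mem_range.mp hj),
    sum_congr rfl fun j hj => if_neg (not_lt.mpr (mem_Ico.mp hj).1),
    hF.sum_range_mul, hF_sum, Finset.sum_const, Nat.card_Ico, nsmul_eq_mul, nsmul_eq_mul,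
    Nat.cast_sub hqN, Nat.cast_mul]

theorem Real.sqrt_mul_le_sqrt_mul_sq_add {q x r : ℝ} (hq : 0 ≤ q) (hx : 0 ≤ x) (hr : 0 ≤ r) :
    √q * x ≤ √(q * x ^ 2 + r) := by
  rw [← Real.sqrt_sq hx, ← Real.sqrt_mul hq, Real.sqrt_sq hx]
  exact Real.sqrt_le_sqrt (le_add_of_nonneg_right hr)

namespace MABS

theorem vnorm_nonneg {M : ℕ} (v : Fin M → ℝ) : 0 ≤ vnorm v := Real.sqrt_nonneg _

theorem rowNorm_nonneg {m M : ℕ} (ω : Fin m → Fin M → ℝ) (i : Fin m) : 0 ≤ rowNorm ω i :=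
  vnorm_nonneg _

theorem ASB_eq_zero_of_not_exists_ne {𝔄 : Finset ℝ} {m M : ℕ} {ω : Fin m → Fin M → ℝ}
    (h : ¬∃ e e' : Fin m → ℝ, inAlph 𝔄 e ∧ inAlph 𝔄 e' ∧ e ≠ e') : ASB 𝔄 ω = 0 := by
  refine (congrArg sInf (Set.eq_empty_of_forall_notMem ?_)).trans Real.sInf_empty
  rintro _ ⟨e, e', he, he', hne, -⟩
  exact h ⟨e, e', he, he', hne⟩

theorem mul_ASB_le_ASB_of_le {𝔄 : Finset ℝ} {m N M : ℕ} {ω' : Fin m → Fin N → ℝ}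
    {ω : Fin m → Fin M → ℝ} {c : ℝ} (hc : 0 ≤ c)
    (h : ∀ e e', c * vnorm (mix e ω' - mix e' ω') ≤ vnorm (mix e ω - mix e' ω)) :
    c * √N / √M * ASB 𝔄 ω' ≤ ASB 𝔄 ω := by
  by_cases hwords : ∃ e e' : Fin m → ℝ, inAlph 𝔄 e ∧ inAlph 𝔄 e' ∧ e ≠ e'
  swap
  · rw [ASB_eq_zero_of_not_exists_ne hwords, ASB_eq_zero_of_not_exists_ne hwords, mul_zero]
  obtain ⟨e₀, e₀', he₀, he₀', hne₀⟩ := hwords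
  refine le_csInf ?_ ?_
  · exact ⟨_, e₀, e₀', he₀, he₀', hne₀, rfl⟩
  rintro _ ⟨e, e', he, he', hne, rfl⟩
  have hbdd : BddBelow {x : ℝ | ∃ e e' : Fin m → ℝ, inAlph 𝔄 e ∧ inAlph 𝔄 e' ∧
      e ≠ e' ∧ x = vnorm (mix e ω' - mix e' ω') / √(N : ℝ)} := by
    refine ⟨0, ?_⟩
    rintro _ ⟨_, _, _, _, _, rfl⟩
    exact div_nonneg (vnorm_nonneg _) (Real.sqrt_nonneg _)
  calc c * √N / √M * ASB 𝔄 ω'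
      ≤ c * √N / √M * (vnorm (mix e ω' - mix e' ω') / √N) :=
        mul_le_mul_of_nonneg_left (csInf_le hbdd ⟨e, e', he, he', hne, rfl⟩) (by positivity)
    _ = c * vnorm (mix e ω' - mix e' ω') / √M * (√N / √N) := by ring
    _ ≤ c * vnorm (mix e ω' - mix e' ω') / √M :=
        mul_le_of_le_one_right (by have := vnorm_nonneg (mix e ω' - mix e' ω'); positivity)
          (div_self_le_one _)
    _ ≤ vnorm (mix e ω - mix e' ω) / √M :=
        div_le_div_of_nonneg_right (h e e') (Real.sqrt_nonneg _)

theorem WSBge.of_mul_gap_le {ak δ c : ℝ} {m N M : ℕ} {ω' : Fin m → Fin N → ℝ}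
    {ω : Fin m → Fin M → ℝ}
    (hak : 0 ≤ 1 + m * ak) (hN : 0 < N) (hc : 0 ≤ c)
    (hgap : ∀ i j : Fin m, (j : ℕ) = i + 1 →
      c * (rowNorm ω' j - rowNorm ω' i) ≤ rowNorm ω j - rowNorm ω i)
    (h : WSBge ak δ ω') : WSBge ak (c * √N / √M * δ) ω := by
  intro i j hij
  have hN' : 0 < √(N : ℝ) := Real.sqrt_pos.mpr (by exact_mod_cast hN)
  calc c * √N / √M * δ
      ≤ c * √N / √M * ((1 + m * ak) / (2 * √N) * (rowNorm ω' j - rowNorm ω' i)) :=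
        mul_le_mul_of_nonneg_left (h i j hij) (by positivity)
    _ = (1 + m * ak) / (2 * √M) * (c * (rowNorm ω' j - rowNorm ω' i)) := by
        field_simp
    _ ≤ (1 + m * ak) / (2 * √M) * (rowNorm ω j - rowNorm ω i) :=
        mul_le_mul_of_nonneg_left (hgap i j hij) (by positivity)

def lastUnitCol (m : ℕ) : Fin m → ℝ := fun i => if (i : ℕ) = m - 1 then 1 else 0

theorem lastUnitCol_nonneg (m : ℕ) (i : Fin m) : 0 ≤ lastUnitCol m i := by
  unfold lastUnitCol
  split_ifs <;> norm_num

theorem sum_lastUnitCol {m : ℕ} (hm : 0 < m) : ∑ i, lastUnitCol m i = 1 := by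
  rw [Fintype.sum_eq_single (f := lastUnitCol m) ⟨m - 1, by omega⟩
    fun i hi => if_neg fun h => hi (Fin.ext h)]
  exact if_pos rfl

theorem monotone_lastUnitCol_sq (m : ℕ) : Monotone fun i => lastUnitCol m i ^ 2 := by
  intro i i' hii'
  have := i'.isLt
  have : (i : ℕ) ≤ i' := hii'
  dsimp only [lastUnitCol]
  split_ifs <;> norm_num
  omega

theorem lastUnitCol_of_succ_lt {m : ℕ} {i : Fin m} (hi : (i : ℕ) + 1 < m) :
    lastUnitCol m i = 0 :=
  if_neg (by omega)

section blockExtend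

variable {m N M : ℕ} (hN : 0 < N) (ω' : Fin m → Fin N → ℝ) (q : ℕ) (c : Fin m → ℝ)

def blockExtend : Fin m → Fin M → ℝ := fun i j =>
  if (j : ℕ) < q * N then ω' i ⟨(j : ℕ) % N, Nat.mod_lt _ hN⟩ else c i

theorem sum_cols_blockExtend (hqN : q * N ≤ M) (φ : (Fin m → ℝ) → ℝ) :
    ∑ j : Fin M, φ (fun i => blockExtend hN ω' q c i j) =
      q * ∑ j, φ (fun i => ω' i j) + ((M : ℝ) - q * N) * φ c := by
  rw [← Fin.sum_ite_lt_mul_mod hN hqN]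
  refine sum_congr rfl fun j _ => ?_
  unfold blockExtend
  split_ifs <;> rfl

theorem rowNorm_blockExtend (hqN : q * N ≤ M) (i : Fin m) :
    rowNorm (blockExtend hN ω' q c : Fin m → Fin M → ℝ) i =
      √(q * rowNorm ω' i ^ 2 + ((M : ℝ) - q * N) * c i ^ 2) := by
  rw [rowNorm, rowNorm, vnorm, vnorm, Real.sq_sqrt (sum_nonneg fun _ _ => sq_nonneg _)]
  exact congrArg _ (sum_cols_blockExtend hN ω' q c hqN fun v => v i ^ 2)

theorem vnorm_mix_sub_blockExtend (hqN : q * N ≤ M) (e e' : Fin m → ℝ) :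
    vnorm (mix e (blockExtend hN ω' q c : Fin m → Fin M → ℝ) - mix e' (blockExtend hN ω' q c)) =
      √(q * vnorm (mix e ω' - mix e' ω') ^ 2 +
        ((M : ℝ) - q * N) * (∑ i, e i * c i - ∑ i, e' i * c i) ^ 2) := by
  rw [vnorm, vnorm, Real.sq_sqrt (sum_nonneg fun _ _ => sq_nonneg _)]
  exact congrArg _
    (sum_cols_blockExtend hN ω' q c hqN fun v => (∑ i, e i * v i - ∑ i, e' i * v i) ^ 2)

variable {q} in
theorem Omega_blockExtend (hq : 0 < q) (hqN : q * N ≤ M) (hω' : Omega ω')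
    (hc_nonneg : ∀ i, 0 ≤ c i) (hc_sum : ∑ i, c i = 1) (hc_mono : Monotone fun i => c i ^ 2) :
    Omega (blockExtend hN ω' q c : Fin m → Fin M → ℝ) := by
  obtain ⟨hω'_nonneg, hω'_sum, hω'_pos, hω'_mono⟩ := hω'
  have hR : (0 : ℝ) ≤ M - q * N := sub_nonneg.mpr (by exact_mod_cast hqN)
  have hq' : (0 : ℝ) < q := by exact_mod_cast hq
  refine ⟨fun i j => ?_, fun j => ?_, fun i => ?_, fun i i' hii' => ?_⟩
  · unfold blockExtend
    split_ifs
    exacts [hω'_nonneg _ _, hc_nonneg i]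
  · unfold blockExtend
    split_ifs
    exacts [hω'_sum _, hc_sum]
  · rw [rowNorm_blockExtend hN ω' q c hqN]
    exact Real.sqrt_pos.mpr <| add_pos_of_pos_of_nonneg
      (mul_pos hq' (pow_pos (hω'_pos i) 2)) (mul_nonneg hR (sq_nonneg _))
  · simp only [rowNorm_blockExtend hN ω' q c hqN]
    refine Real.sqrt_lt_sqrt (by positivity) (add_lt_add_of_lt_of_le ?_ ?_)
    · exact mul_lt_mul_of_pos_left
        (pow_lt_pow_left₀ (hω'_mono hii') (hω'_pos i).le two_ne_zero) hq'
    · exact mul_le_mul_of_nonneg_left (hc_mono hii'.le) hR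

theorem mul_ASB_le_ASB_blockExtend (hqN : q * N ≤ M) (𝔄 : Finset ℝ) :
    √q * √N / √M * ASB 𝔄 ω' ≤ ASB 𝔄 (blockExtend hN ω' q c : Fin m → Fin M → ℝ) := by
  have hR : (0 : ℝ) ≤ M - q * N := sub_nonneg.mpr (by exact_mod_cast hqN)
  refine mul_ASB_le_ASB_of_le (Real.sqrt_nonneg _) fun e e' => ?_
  rw [vnorm_mix_sub_blockExtend hN ω' q c hqN]
  exact Real.sqrt_mul_le_sqrt_mul_sq_add q.cast_nonneg (vnorm_nonneg _)
    (mul_nonneg hR (sq_nonneg _))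

theorem WSBge_blockExtend (hqN : q * N ≤ M) {ak δ : ℝ} (hak : 0 ≤ 1 + m * ak)
    (hc : ∀ i : Fin m, (i : ℕ) + 1 < m → c i = 0) (h : WSBge ak δ ω') :
    WSBge ak (√q * √N / √M * δ) (blockExtend hN ω' q c : Fin m → Fin M → ℝ) := by
  have hR : (0 : ℝ) ≤ M - q * N := sub_nonneg.mpr (by exact_mod_cast hqN)
  refine WSBge.of_mul_gap_le hak hN (Real.sqrt_nonneg _) (fun i j hij => ?_) h
  have hi : rowNorm (blockExtend hN ω' q c : Fin m → Fin M → ℝ) i = √q * rowNorm ω' i := by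
    rw [rowNorm_blockExtend hN ω' q c hqN, hc i (hij ▸ j.isLt), zero_pow two_ne_zero, mul_zero,
      add_zero, Real.sqrt_mul q.cast_nonneg, Real.sqrt_sq (rowNorm_nonneg _ _)]
  have hj : √q * rowNorm ω' j ≤ rowNorm (blockExtend hN ω' q c : Fin m → Fin M → ℝ) j := by
    rw [rowNorm_blockExtend hN ω' q c hqN]
    exact Real.sqrt_mul_le_sqrt_mul_sq_add q.cast_nonneg (rowNorm_nonneg _ _)
      (mul_nonneg hR (sq_nonneg _))
  rw [hi, mul_sub]
  exact sub_le_sub_right hj _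

end blockExtend

end MABS

/-- If `ω' ∈ Ω_{m,m}` satisfies `min(ASB, WSB) ≥ 0.2·Δ𝔄_min/√m`, then for
any `M ≥ m` the block matrix `ω = (ω', …, ω' (⌊M/m⌋ copies), e^m, …, e^m)` lies in
`Ω_{m,M}` and satisfies `ASB(ω) ≥ δ` and `WSB(ω) ≥ δ` for
`δ = 0.2·Δ𝔄_min·√⌊M/m⌋/√M`; in particular `Ω_{m,M}^δ` is non-empty. -/
theorem stmt7 {m M : ℕ} (hm : 0 < m) (hmM : m ≤ M) (𝔄 : Finset ℝ) (ak : ℝ)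
    (hA : MABS.AlphOK 𝔄 ak) (ω' : Fin m → Fin m → ℝ) (hΩ : MABS.Omega ω')
    (hasb : 0.2 * MABS.DeltaMin 𝔄 / Real.sqrt (m : ℝ) ≤ MABS.ASB 𝔄 ω')
    (hwsb : MABS.WSBge ak (0.2 * MABS.DeltaMin 𝔄 / Real.sqrt (m : ℝ)) ω') :
    let δ : ℝ := 0.2 * MABS.DeltaMin 𝔄 * Real.sqrt ((M / m : ℕ) : ℝ) / Real.sqrt (M : ℝ)
    let ω : Fin m → Fin M → ℝ := fun i j =>
      if (j : ℕ) < (M / m) * m then ω' i ⟨(j : ℕ) % m, Nat.mod_lt _ hm⟩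
      else if (i : ℕ) = m - 1 then 1 else 0
    MABS.Omega ω ∧ δ ≤ MABS.ASB 𝔄 ω ∧ MABS.WSBge ak δ ω := by
  intro δ ω
  obtain ⟨hA_zero, -, -, hA_max, -⟩ := hA
  have hak : 0 ≤ 1 + m * ak := by
    have := hA_max 0 hA_zero
    positivity
  have hqm : M / m * m ≤ M := Nat.div_mul_le_self M m
  have hδ : δ = √(M / m : ℕ) * √m / √M * (0.2 * MABS.DeltaMin 𝔄 / √m) := by
    have : √(m : ℝ) ≠ 0 := (Real.sqrt_pos.mpr (by exact_mod_cast hm)).ne'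
    simp only [δ]
    field_simp
  rw [hδ]
  exact ⟨MABS.Omega_blockExtend hm ω' _ (Nat.div_pos hmM hm) hqm hΩ (MABS.lastUnitCol_nonneg m)
      (MABS.sum_lastUnitCol hm) (MABS.monotone_lastUnitCol_sq m),
    (mul_le_mul_of_nonneg_left hasb (by positivity)).trans
      (MABS.mul_ASB_le_ASB_blockExtend hm ω' _ _ hqm 𝔄),
    MABS.WSBge_blockExtend hm ω' _ _ hqm hak (fun _ => MABS.lastUnitCol_of_succ_lt) hwsb⟩
end

section
/- If Ω_{m,M}^{δ} is non-empty for some δ > 0, then there exists ω ∈ Ω_{m,M}^{δ} with ASB(ω) = δ exactly. The witness is obtained by continuously shrinking the first row: ω^ε with ω^ε_{1j} = ε·ω_{1j}, ω^ε_{mj} = ω_{mj} + (1−ε)·ω_{1j}, and other rows unchanged, using the intermediate value theorem on ε ↦ ASB(ω^ε), noting ASB(ω^0) = 0, ASB(ω^1) ≥ δ, and WSB(ω^ε) ≥ WSB(ω) for all ε ∈ [0,1]. -/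
open Finset Real

/-! Deform `ω` continuously by `ω^ε`, which scales the first row by `ε` and moves the removed
mass `(1 - ε) ω₁` onto the last row. Column sums are preserved, the first row norm only
decreases and the last one only increases, so every consecutive row-norm gap grows and
`ω^ε ∈ Ω` with `WSB(ω^ε) ≥ WSB(ω)` for `0 < ε ≤ 1`. `ASB` is a minimum of finitely many
continuous functions of the matrix, hence continuous; at `ε = 0` the first row vanishes, so two
words differing only in the first letter give the same mixture and `ASB(ω^0) = 0`. The
intermediate value theorem yields `ε` with `ASB(ω^ε) = δ`. -/

namespace MABS

lemma vnorm_le_vnorm {M : ℕ} {u v : Fin M → ℝ} (hu : ∀ j, 0 ≤ u j) (huv : ∀ j, u j ≤ v j) :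
    vnorm u ≤ vnorm v :=
  Real.sqrt_le_sqrt <| Finset.sum_le_sum fun j _ => pow_le_pow_left₀ (hu j) (huv j) 2

section ASB

variable {m M : ℕ} (𝔄 : Finset ℝ)

open Classical in
noncomputable def distinctWordPairs (m : ℕ) : Finset ((Fin m → ℝ) × (Fin m → ℝ)) :=
  (Fintype.piFinset (fun _ => 𝔄) ×ˢ Fintype.piFinset (fun _ => 𝔄)).filter fun p => p.1 ≠ p.2

lemma mem_distinctWordPairs {p : (Fin m → ℝ) × (Fin m → ℝ)} :
    p ∈ distinctWordPairs 𝔄 m ↔ inAlph 𝔄 p.1 ∧ inAlph 𝔄 p.2 ∧ p.1 ≠ p.2 := by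
  simp [distinctWordPairs, inAlph, and_assoc]

lemma ASB_eq_sInf_image (ω : Fin m → Fin M → ℝ) :
    ASB 𝔄 ω = sInf ((fun p : (Fin m → ℝ) × (Fin m → ℝ) =>
      vnorm (mix p.1 ω - mix p.2 ω) / √(M : ℝ)) '' distinctWordPairs 𝔄 m) := by
  unfold ASB
  congr 1
  ext x
  simp only [Set.mem_ofPred_eq, Set.mem_image, Finset.mem_coe, mem_distinctWordPairs, Prod.exists]
  grind

lemma ASB_nonneg (ω : Fin m → Fin M → ℝ) : 0 ≤ ASB 𝔄 ω :=
  Real.sInf_nonneg fun _ ⟨_, _, _, _, _, hx⟩ => hx ▸ by unfold vnorm; positivity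

lemma continuous_ASB : Continuous (ASB 𝔄 : (Fin m → Fin M → ℝ) → ℝ) := by
  rcases (distinctWordPairs 𝔄 m).eq_empty_or_nonempty with h | h
  · simpa [funext (ASB_eq_sInf_image 𝔄), h] using continuous_const
  · have hinf : ASB 𝔄 = fun ω : Fin m → Fin M → ℝ =>
        (distinctWordPairs 𝔄 m).inf' h fun p => vnorm (mix p.1 ω - mix p.2 ω) / √(M : ℝ) :=
      funext fun ω => by rw [ASB_eq_sInf_image, Finset.inf'_eq_csInf_image]
    rw [hinf]
    exact Continuous.finset_inf'_apply h fun p _ => by unfold vnorm mix; fun_prop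

lemma exists_ne_mem_of_ASB_pos {ω : Fin m → Fin M → ℝ} (h : 0 < ASB 𝔄 ω) :
    ∃ a ∈ 𝔄, ∃ b ∈ 𝔄, a ≠ b := by
  by_contra! hA
  have hempty : {x : ℝ | ∃ e e' : Fin m → ℝ, inAlph 𝔄 e ∧ inAlph 𝔄 e' ∧ e ≠ e' ∧
      x = vnorm (mix e ω - mix e' ω) / √(M : ℝ)} = ∅ := by
    refine Set.eq_empty_iff_forall_notMem.2 ?_
    rintro _ ⟨e, e', he, he', hne, -⟩
    obtain ⟨i, hi⟩ := Function.ne_iff.1 hne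
    exact hi (hA _ (he i) _ (he' i))
  rw [ASB, hempty, Real.sInf_empty] at h
  exact h.false

lemma mix_update_eq_of_row_eq_zero {ω : Fin m → Fin M → ℝ} {i : Fin m} (hω : ω i = 0)
    (e : Fin m → ℝ) (a : ℝ) : mix (Function.update e i a) ω = mix e ω := by
  funext j
  refine Finset.sum_congr rfl fun k _ => ?_
  rcases eq_or_ne k i with rfl | hk
  · simp [hω]
  · rw [Function.update_of_ne hk]

lemma ASB_eq_zero_of_row_eq_zero {ω : Fin m → Fin M → ℝ} {i : Fin m} (hω : ω i = 0)
    {a b : ℝ} (ha : a ∈ 𝔄) (hb : b ∈ 𝔄) (hab : a ≠ b) : ASB 𝔄 ω = 0 := by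
  refine le_antisymm (csInf_le ⟨0, ?_⟩ ⟨Function.update (fun _ => b) i a, fun _ => b, ?_⟩)
    (ASB_nonneg 𝔄 ω)
  · rintro _ ⟨e, e', -, -, -, rfl⟩
    unfold vnorm
    positivity
  · refine ⟨fun k => ?_, fun _ => hb, fun h => hab ?_, ?_⟩
    · rcases eq_or_ne k i with rfl | hk
      · simpa
      · simpa [hk]
    · simpa using congrFun h i
    · simp [mix_update_eq_of_row_eq_zero hω, vnorm]

end ASB

section shrinkRow

variable {m M : ℕ} (ω : Fin m → Fin M → ℝ) (i₀ i₁ : Fin m)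

def shrinkRow (ε : ℝ) : Fin m → Fin M → ℝ :=
  fun i j => if i = i₀ then ε * ω i₀ j else if i = i₁ then ω i₁ j + (1 - ε) * ω i₀ j else ω i j

lemma shrinkRow_one : shrinkRow ω i₀ i₁ 1 = ω := by
  funext i j
  unfold shrinkRow
  split_ifs <;> subst_vars <;> ring

lemma shrinkRow_zero_self : shrinkRow ω i₀ i₁ 0 i₀ = 0 := by
  funext j
  simp [shrinkRow]

lemma continuous_shrinkRow : Continuous (shrinkRow ω i₀ i₁) :=
  continuous_pi fun i => continuous_pi fun j => by unfold shrinkRow; split_ifs <;> fun_prop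

variable {ω i₀ i₁}

lemma shrinkRow_nonneg (hω : ∀ i j, 0 ≤ ω i j) {ε : ℝ} (hε₀ : 0 ≤ ε) (hε₁ : ε ≤ 1)
    (i : Fin m) (j : Fin M) : 0 ≤ shrinkRow ω i₀ i₁ ε i j := by
  unfold shrinkRow
  have := hω i₀ j
  split_ifs
  · positivity
  · nlinarith [hω i₁ j]
  · exact hω i j

lemma sum_shrinkRow (h : i₀ ≠ i₁) (ε : ℝ) (j : Fin M) :
    ∑ i, shrinkRow ω i₀ i₁ ε i j = ∑ i, ω i j := by
  set c := (1 - ε) * ω i₀ j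
  have hpt : ∀ i, shrinkRow ω i₀ i₁ ε i j
      = ω i j + (if i = i₁ then c else 0) - (if i = i₀ then c else 0) := by
    intro i
    unfold shrinkRow
    rcases eq_or_ne i i₀ with rfl | h₀
    · simp only [↓reduceIte, h, add_zero]; ring
    · rcases eq_or_ne i i₁ with rfl | h₁ <;> simp [*, c]
  simp [hpt, Finset.sum_add_distrib, Finset.sum_sub_distrib]

lemma rowNorm_shrinkRow_self {ε : ℝ} (hε : 0 ≤ ε) :
    rowNorm (shrinkRow ω i₀ i₁ ε) i₀ = ε * rowNorm ω i₀ := by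
  simp only [rowNorm, vnorm, shrinkRow, if_true, mul_pow, ← Finset.mul_sum]
  rw [Real.sqrt_mul (sq_nonneg ε), Real.sqrt_sq hε]

lemma rowNorm_shrinkRow_of_ne {i : Fin m} (h₀ : i ≠ i₀) (h₁ : i ≠ i₁) (ε : ℝ) :
    rowNorm (shrinkRow ω i₀ i₁ ε) i = rowNorm ω i := by
  unfold rowNorm
  congr 1
  funext j
  simp [shrinkRow, h₀, h₁]

lemma rowNorm_le_rowNorm_shrinkRow_target (h : i₀ ≠ i₁) (hω : ∀ i j, 0 ≤ ω i j) {ε : ℝ}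
    (hε : ε ≤ 1) : rowNorm ω i₁ ≤ rowNorm (shrinkRow ω i₀ i₁ ε) i₁ :=
  vnorm_le_vnorm (hω i₁) fun j => by
    simp only [shrinkRow, h.symm, if_false, if_true]
    nlinarith [hω i₀ j]

lemma rowNorm_sub_le_rowNorm_shrinkRow_sub (h₀ : ∀ i, i₀ ≤ i) (h₁ : ∀ i, i ≤ i₁)
    (hne : i₀ ≠ i₁) (hω : ∀ i j, 0 ≤ ω i j) {ε : ℝ} (hε₀ : 0 ≤ ε) (hε₁ : ε ≤ 1)
    {i j : Fin m} (hij : i < j) :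
    rowNorm ω j - rowNorm ω i ≤
      rowNorm (shrinkRow ω i₀ i₁ ε) j - rowNorm (shrinkRow ω i₀ i₁ ε) i := by
  have hi : i ≠ i₁ := (hij.trans_le (h₁ j)).ne
  have hj : j ≠ i₀ := ((h₀ i).trans_lt hij).ne'
  have hle_i : rowNorm (shrinkRow ω i₀ i₁ ε) i ≤ rowNorm ω i := by
    rcases eq_or_ne i i₀ with rfl | h
    · rw [rowNorm_shrinkRow_self hε₀]
      exact mul_le_of_le_one_left (Real.sqrt_nonneg _) hε₁
    · rw [rowNorm_shrinkRow_of_ne h hi]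
  have hle_j : rowNorm ω j ≤ rowNorm (shrinkRow ω i₀ i₁ ε) j := by
    rcases eq_or_ne j i₁ with rfl | h
    · exact rowNorm_le_rowNorm_shrinkRow_target hne hω hε₁
    · rw [rowNorm_shrinkRow_of_ne hj h]
  linarith

lemma Omega.shrinkRow (hΩ : Omega ω) (h₀ : ∀ i, i₀ ≤ i) (h₁ : ∀ i, i ≤ i₁) (hne : i₀ ≠ i₁)
    {ε : ℝ} (hε₀ : 0 < ε) (hε₁ : ε ≤ 1) : Omega (MABS.shrinkRow ω i₀ i₁ ε) := by
  obtain ⟨hω, hsum, hpos, hmono⟩ := hΩ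
  have hmono' : StrictMono (rowNorm (MABS.shrinkRow ω i₀ i₁ ε)) := fun i j hij => by
    linarith [hmono hij, rowNorm_sub_le_rowNorm_shrinkRow_sub h₀ h₁ hne hω hε₀.le hε₁ hij]
  have hpos₀ : 0 < rowNorm (MABS.shrinkRow ω i₀ i₁ ε) i₀ := by
    rw [rowNorm_shrinkRow_self hε₀.le]
    exact mul_pos hε₀ (hpos i₀)
  exact ⟨shrinkRow_nonneg hω hε₀.le hε₁, fun j => (sum_shrinkRow hne ε j).trans (hsum j),
    fun i => hpos₀.trans_le (hmono'.monotone (h₀ i)), hmono'⟩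

end shrinkRow

lemma WSBge.mono {m M : ℕ} {ak δ : ℝ} {ω ψ : Fin m → Fin M → ℝ} (hδ : 0 < δ)
    (hω : WSBge ak δ ω) (hmono : StrictMono (rowNorm ω))
    (hgap : ∀ i j : Fin m, i < j → rowNorm ω j - rowNorm ω i ≤ rowNorm ψ j - rowNorm ψ i) :
    WSBge ak δ ψ := by
  intro i j hij
  have hlt : i < j := Fin.lt_def.2 (by omega)
  have hC : 0 ≤ (1 + (m : ℝ) * ak) / (2 * √(M : ℝ)) :=
    nonneg_of_mul_nonneg_left (hδ.le.trans (hω i j hij)) (sub_pos.2 (hmono hlt))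
  exact (hω i j hij).trans (mul_le_mul_of_nonneg_left (hgap i j hlt) hC)

end MABS

theorem stmt8_general {m M : ℕ} (hm : 2 ≤ m) (𝔄 : Finset ℝ) (ak : ℝ) (δ : ℝ) (hδ : 0 < δ)
    (ω : Fin m → Fin M → ℝ) (hΩ : MABS.Omega ω)
    (hasb : δ ≤ MABS.ASB 𝔄 ω) (hwsb : MABS.WSBge ak δ ω) :
    ∃ ψ : Fin m → Fin M → ℝ,
      MABS.Omega ψ ∧ MABS.ASB 𝔄 ψ = δ ∧ MABS.WSBge ak δ ψ := by
  open MABS in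
  obtain ⟨n, rfl⟩ := Nat.exists_eq_add_of_le' hm
  have hne : (0 : Fin (n + 2)) ≠ Fin.last (n + 1) := Fin.last_pos.ne
  obtain ⟨a, ha, b, hb, hab⟩ := exists_ne_mem_of_ASB_pos 𝔄 (hδ.trans_le hasb)
  have hASB₀ : ASB 𝔄 (shrinkRow ω 0 (Fin.last _) 0) = 0 :=
    ASB_eq_zero_of_row_eq_zero 𝔄 (shrinkRow_zero_self ω _ _) ha hb hab
  obtain ⟨ε, ⟨hε₀, hε₁⟩, hε⟩ := intermediate_value_Icc zero_le_one
    ((continuous_ASB 𝔄).comp (continuous_shrinkRow ω 0 (Fin.last _))).continuousOn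
    ⟨hASB₀ ▸ hδ.le, by rwa [Function.comp_apply, shrinkRow_one]⟩
  have hεpos : 0 < ε := hε₀.lt_of_ne <| by rintro rfl; exact hδ.ne' (hε.symm.trans hASB₀)
  exact ⟨_, hΩ.shrinkRow Fin.zero_le Fin.le_last hne hεpos hε₁, hε,
    hwsb.mono hδ hΩ.2.2.2 fun i j =>
      rowNorm_sub_le_rowNorm_shrinkRow_sub Fin.zero_le Fin.le_last hne hΩ.1 hε₀ hε₁⟩

/-- If `Ω_{m,M}^δ` is non-empty for some `δ > 0`, then there exists an
element of `Ω_{m,M}^δ` with `ASB = δ` exactly (and still `WSB ≥ δ`). -/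
theorem stmt8 {m M : ℕ} (hm : 2 ≤ m) (hM : 0 < M) (𝔄 : Finset ℝ) (ak : ℝ)
    (hA : MABS.AlphOK 𝔄 ak) (δ : ℝ) (hδ : 0 < δ)
    (ω : Fin m → Fin M → ℝ) (hΩ : MABS.Omega ω)
    (hasb : δ ≤ MABS.ASB 𝔄 ω) (hwsb : MABS.WSBge ak δ ω) :
    ∃ ψ : Fin m → Fin M → ℝ,
      MABS.Omega ψ ∧ MABS.ASB 𝔄 ψ = δ ∧ MABS.WSBge ak δ ψ :=
  stmt8_general hm 𝔄 ak δ hδ ω hΩ hasb hwsb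
end

section
/- In the MABS model, identifiability holds: if (ω, Π) and (ω', Π') both satisfy min(ASB, WSB) ≥ δ for some δ > 0 and both ΠA and Π'A contain all unit vectors e^1,…,e^m among their rows, then ΠAω = Π'Aω' implies ω = ω' and Π = Π'. -/
open Finset Real

namespace MABS

lemma unitRow_inAlph {m : ℕ} (𝔄 : Finset ℝ) (ak : ℝ) (hA : AlphOK 𝔄 ak) (i : Fin m) :
    inAlph 𝔄 (unitRow i) := by
  intro i'
  unfold unitRow
  split
  · exact hA.2.1
  · exact hA.1

lemma mix_unitRow {m M : ℕ} (i : Fin m) (ω : Fin m → Fin M → ℝ) :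
    mix (unitRow i) ω = ω i := by
  funext j
  simp [mix, unitRow, ite_mul]

lemma vnorm_mono {M : ℕ} {v w : Fin M → ℝ} (h0 : ∀ j, 0 ≤ v j) (h : ∀ j, v j ≤ w j) :
    vnorm v ≤ vnorm w := by
  apply Real.sqrt_le_sqrt
  exact Finset.sum_le_sum fun j _ => pow_le_pow_left₀ (h0 j) (h j) 2

lemma vnorm_smul {M : ℕ} (c : ℝ) (hc : 0 ≤ c) (v : Fin M → ℝ) :
    vnorm (fun j => c * v j) = c * vnorm v := by
  have h : ∑ j, (c * v j) ^ 2 = c ^ 2 * ∑ j, (v j) ^ 2 := by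
    rw [Finset.mul_sum]; congr 1; funext j; ring
  rw [vnorm, vnorm, h, Real.sqrt_mul (sq_nonneg c), Real.sqrt_sq hc]

lemma mix_inj {m M : ℕ} (𝔄 : Finset ℝ) (δ : ℝ) (hδ : 0 < δ) (ω : Fin m → Fin M → ℝ)
    (hasb : δ ≤ ASB 𝔄 ω) {e e' : Fin m → ℝ} (he : inAlph 𝔄 e) (he' : inAlph 𝔄 e')
    (h : mix e ω = mix e' ω) : e = e' := by
  by_contra hne
  unfold ASB at hasb
  have hmem : (0 : ℝ) ∈ {x : ℝ | ∃ a b : Fin m → ℝ, inAlph 𝔄 a ∧ inAlph 𝔄 b ∧ a ≠ b ∧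
      x = vnorm (mix a ω - mix b ω) / Real.sqrt (M : ℝ)} := by
    refine ⟨e, e', he, he', hne, ?_⟩
    rw [h, sub_self]
    simp [vnorm]
  have hbdd : BddBelow {x : ℝ | ∃ a b : Fin m → ℝ, inAlph 𝔄 a ∧ inAlph 𝔄 b ∧ a ≠ b ∧
      x = vnorm (mix a ω - mix b ω) / Real.sqrt (M : ℝ)} := by
    refine ⟨0, ?_⟩
    rintro x ⟨a, b, -, -, -, rfl⟩
    exact div_nonneg (Real.sqrt_nonneg _) (Real.sqrt_nonneg _)
  have := csInf_le hbdd hmem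
  linarith

lemma le_vnorm_mix {m M : ℕ} {e : Fin m → ℝ} {ω : Fin m → Fin M → ℝ}
    (he : ∀ i, 0 ≤ e i) (hω : ∀ i j, 0 ≤ ω i j) (l : Fin m) :
    e l * rowNorm ω l ≤ vnorm (mix e ω) := by
  rw [rowNorm, ← vnorm_smul (e l) (he l)]
  apply vnorm_mono (fun j => mul_nonneg (he l) (hω l j))
  intro j
  exact Finset.single_le_sum (fun i _ => mul_nonneg (he i) (hω i j)) (Finset.mem_univ l)

lemma alph_nonneg {𝔄 : Finset ℝ} {ak : ℝ} (hA : AlphOK 𝔄 ak) {x : ℝ} (hx : x ∈ 𝔄) :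
    0 ≤ x := by
  rcases hA.2.2.2.2 x hx with h | h
  · exact h.ge
  · linarith

/-- If the coefficient vector `e` representing `ω i` vanishes at all indices `≥ i`,
we contradict injectivity of `mix · ω`. -/
lemma no_low_support {m M : ℕ} (𝔄 : Finset ℝ) (ak δ : ℝ) (hA : AlphOK 𝔄 ak) (hδ : 0 < δ)
    (ω ω' : Fin m → Fin M → ℝ) (hasb : δ ≤ ASB 𝔄 ω)
    {e : Fin m → ℝ} (he : inAlph 𝔄 e) {i : Fin m}
    (hmix : ω i = mix e ω')
    (IH : ∀ l : Fin m, l < i → ω l = ω' l)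
    (hlow : ∀ l : Fin m, i ≤ l → e l = 0) : False := by
  have hmm : mix e ω' = mix e ω := by
    funext j
    refine Finset.sum_congr rfl fun p _ => ?_
    rcases lt_or_ge p i with h | h
    · rw [IH p h]
    · rw [hlow p h]; ring
  have h2 : mix e ω = mix (unitRow i) ω := by
    rw [← hmm, ← hmix, mix_unitRow]
  have h3 := mix_inj 𝔄 δ hδ ω hasb he (unitRow_inAlph 𝔄 ak hA i) h2
  have h0 := hlow i le_rfl
  rw [h3] at h0
  simp [unitRow] at h0

/-- One-sided norm comparison. -/
lemma key {m M : ℕ} (𝔄 : Finset ℝ) (ak δ : ℝ) (hA : AlphOK 𝔄 ak) (hδ : 0 < δ)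
    (ω ω' : Fin m → Fin M → ℝ) (hΩ' : Omega ω') (hasb : δ ≤ ASB 𝔄 ω)
    {e : Fin m → ℝ} (he : inAlph 𝔄 e) {i : Fin m}
    (hmix : ω i = mix e ω')
    (IH : ∀ l : Fin m, l < i → ω l = ω' l) :
    rowNorm ω' i ≤ rowNorm ω i := by
  by_cases h : ∃ l, i ≤ l ∧ e l ≠ 0
  · obtain ⟨l, hil, hel⟩ := h
    have h1 : 1 ≤ e l := (hA.2.2.2.2 _ (he l)).resolve_left hel
    calc rowNorm ω' i ≤ rowNorm ω' l := hΩ'.2.2.2.monotone hil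
      _ ≤ e l * rowNorm ω' l := le_mul_of_one_le_left (hΩ'.2.2.1 l).le h1
      _ ≤ vnorm (mix e ω') :=
          le_vnorm_mix (fun p => alph_nonneg hA (he p)) hΩ'.1 l
      _ = rowNorm ω i := by rw [← hmix]; rfl
  · push_neg at h
    exact absurd (no_low_support 𝔄 ak δ hA hδ ω ω' hasb he hmix IH h) (fun hf => hf)

/-- The inductive step: if the rows agree below `i`, they agree at `i`. -/
lemma step {m M : ℕ} (𝔄 : Finset ℝ) (ak δ : ℝ) (hA : AlphOK 𝔄 ak) (hδ : 0 < δ)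
    (ω ω' : Fin m → Fin M → ℝ) (hΩ : Omega ω) (hΩ' : Omega ω')
    (hasb : δ ≤ ASB 𝔄 ω) (hasb' : δ ≤ ASB 𝔄 ω')
    {e f : Fin m → ℝ} (he : inAlph 𝔄 e) (hf : inAlph 𝔄 f) {i : Fin m}
    (hmix : ω i = mix e ω') (hmix' : ω' i = mix f ω)
    (IH : ∀ l : Fin m, l < i → ω l = ω' l) :
    ω i = ω' i := by
  have IH' : ∀ l : Fin m, l < i → ω' l = ω l := fun l hl => (IH l hl).symm
  have h1 : rowNorm ω' i ≤ rowNorm ω i :=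
    key 𝔄 ak δ hA hδ ω ω' hΩ' hasb he hmix IH
  have h2 : rowNorm ω i ≤ rowNorm ω' i :=
    key 𝔄 ak δ hA hδ ω' ω hΩ hasb' hf hmix' IH'
  have hnorm : rowNorm ω i = rowNorm ω' i := le_antisymm h2 h1
  -- no coefficient strictly above i can be nonzero
  have hhigh : ∀ l : Fin m, i < l → e l = 0 := by
    intro l hl
    by_contra hel
    have hge1 : 1 ≤ e l := (hA.2.2.2.2 _ (he l)).resolve_left hel
    have hlt : rowNorm ω' i < rowNorm ω' l := hΩ'.2.2.2 hl
    have : rowNorm ω' l ≤ rowNorm ω i := by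
      calc rowNorm ω' l ≤ e l * rowNorm ω' l :=
            le_mul_of_one_le_left (hΩ'.2.2.1 l).le hge1
        _ ≤ vnorm (mix e ω') :=
            le_vnorm_mix (fun p => alph_nonneg hA (he p)) hΩ'.1 l
        _ = rowNorm ω i := by rw [← hmix]; rfl
    rw [hnorm] at this
    exact absurd (lt_of_lt_of_le hlt this) (lt_irrefl _)
  -- e i ≥ 1
  have hei : 1 ≤ e i := by
    rcases hA.2.2.2.2 _ (he i) with h0 | h0
    · exfalso
      apply no_low_support 𝔄 ak δ hA hδ ω ω' hasb he hmix IH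
      intro l hl
      rcases eq_or_lt_of_le hl with h | h
      · rw [← h]; exact h0
      · exact hhigh l h
    · exact h0
  -- pointwise lower bound
  have hpt : ∀ j, ω' i j ≤ ω i j := by
    intro j
    have : e i * ω' i j ≤ mix e ω' j :=
      Finset.single_le_sum
        (fun p _ => mul_nonneg (alph_nonneg hA (he p)) (hΩ'.1 p j)) (Finset.mem_univ i)
    have h2 : ω' i j ≤ e i * ω' i j := le_mul_of_one_le_left (hΩ'.1 i j) hei
    rw [hmix]
    linarith
  -- equal sums of squares
  have hs : ∑ j, (ω' i j) ^ 2 = ∑ j, (ω i j) ^ 2 := by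
    have := hnorm
    unfold rowNorm vnorm at this
    have hnn : (0:ℝ) ≤ ∑ j, (ω i j) ^ 2 := Finset.sum_nonneg fun j _ => sq_nonneg _
    have hnn' : (0:ℝ) ≤ ∑ j, (ω' i j) ^ 2 := Finset.sum_nonneg fun j _ => sq_nonneg _
    have := (Real.sqrt_inj hnn hnn').mp this
    linarith
  have hterm : ∀ j ∈ Finset.univ, (ω' i j) ^ 2 = (ω i j) ^ 2 := by
    rw [← Finset.sum_eq_sum_iff_of_le
      (fun j _ => pow_le_pow_left₀ (hΩ'.1 i j) (hpt j) 2)]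
    exact hs
  funext j
  have h := hterm j (Finset.mem_univ j)
  nlinarith [hΩ'.1 i j, hpt j]

end MABS



/-- **identifiability.** If `(ω, F)` and `(ω', F')` are both `δ`-separable
MABS parameters for some `δ > 0` and the noiseless mixtures coincide, `Fω = F'ω'`, then
`ω = ω'` and `F = F'`. -/
theorem stmt10 {n m M : ℕ} (hm : 0 < m) (hM : 0 < M) (𝔄 : Finset ℝ) (ak δ : ℝ)
    (hA : MABS.AlphOK 𝔄 ak) (hδ : 0 < δ)
    (F F' : Fin n → Fin m → ℝ) (hF : MABS.Separable 𝔄 F) (hF' : MABS.Separable 𝔄 F')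
    (ω ω' : Fin m → Fin M → ℝ) (hΩ : MABS.Omega ω) (hΩ' : MABS.Omega ω')
    (hasb : δ ≤ MABS.ASB 𝔄 ω) (hasb' : δ ≤ MABS.ASB 𝔄 ω')
    (hwsb : MABS.WSBge ak δ ω) (hwsb' : MABS.WSBge ak δ ω')
    (heq : ∀ j : Fin n, MABS.mix (F j) ω = MABS.mix (F' j) ω') :
    ω = ω' ∧ F = F' := by
  have hrep : ∀ i : Fin m, ∃ e : Fin m → ℝ, MABS.inAlph 𝔄 e ∧ ω i = MABS.mix e ω' := by
    intro i
    obtain ⟨j, hj⟩ := hF.2 i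
    refine ⟨F' j, hF'.1 j, ?_⟩
    rw [← heq j, hj, MABS.mix_unitRow]
  have hrep' : ∀ i : Fin m, ∃ f : Fin m → ℝ, MABS.inAlph 𝔄 f ∧ ω' i = MABS.mix f ω := by
    intro i
    obtain ⟨j, hj⟩ := hF'.2 i
    refine ⟨F j, hF.1 j, ?_⟩
    rw [heq j, hj, MABS.mix_unitRow]
  have main : ∀ N : ℕ, ∀ i : Fin m, (i : ℕ) = N → ω i = ω' i := by
    intro N
    induction N using Nat.strong_induction_on with
    | _ N IH =>
      intro i hi
      obtain ⟨e, he, hmix⟩ := hrep i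
      obtain ⟨f, hf, hmix'⟩ := hrep' i
      exact MABS.step 𝔄 ak δ hA hδ ω ω' hΩ hΩ' hasb hasb' he hf hmix hmix'
        (fun l hl => IH l.val (hi ▸ (Fin.lt_def.mp hl)) l rfl)
  have hω : ω = ω' := funext fun i => main i.val i rfl
  refine ⟨hω, ?_⟩
  funext j
  apply MABS.mix_inj 𝔄 δ hδ ω hasb (hF.1 j) (hF'.1 j)
  rw [heq j, hω]
end

section
/- Local metric equivalence (lower part): for any two separable MABS parameters (Π, ω), (Π', ω') with min(ASB,WSB) ≥ δ, one has d((Π,ω),(Π',ω')) ≥ ‖ΠAω − Π'Aω'‖/(√n · m · a_k), where d((Π,ω),(Π',ω')) = √M·1_{Π≠Π'} + max_{1≤i≤m}‖ω_{i·} − ω'_{i·}‖ and ‖·‖ is the Frobenius norm on n×M matrices. -/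
open Finset Real

namespace MABS

/-- The metric `d((F,ω),(F',ω')) = √M·1_{F ≠ F'} + max_i ‖ω_{i·} - ω'_{i·}‖`. -/
noncomputable def dmet {n m M : ℕ} (F F' : Fin n → Fin m → ℝ)
    (ω ω' : Fin m → Fin M → ℝ) : ℝ :=
  (if F = F' then 0 else Real.sqrt (M : ℝ)) +
    sSup (Set.range fun i : Fin m => vnorm (ω i - ω' i))

/-- The Frobenius distance `‖Fω - F'ω'‖` between the two `n × M` mixtures. -/
noncomputable def frob {n m M : ℕ} (F F' : Fin n → Fin m → ℝ)
    (ω ω' : Fin m → Fin M → ℝ) : ℝ :=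
  Real.sqrt (∑ j : Fin n, ∑ l : Fin M, (mix (F j) ω l - mix (F' j) ω' l) ^ 2)

end MABS

private lemma cs_key {m M : ℕ} (c : Fin m → ℝ) (d : Fin m → Fin M → ℝ) (ak S : ℝ)
    (hak : 0 ≤ ak) (hS : 0 ≤ S)
    (hc : ∀ i, c i ^ 2 ≤ ak ^ 2) (hd : ∀ i, ∑ l, (d i l) ^ 2 ≤ S ^ 2) :
    ∑ l, (∑ i, c i * d i l) ^ 2 ≤ ((m : ℝ) * ak * S) ^ 2 := by
  have h1 : ∑ l, (∑ i, c i * d i l) ^ 2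
      ≤ ∑ l, (∑ i, (c i) ^ 2) * (∑ i, (d i l) ^ 2) :=
    Finset.sum_le_sum fun l _ => Finset.sum_mul_sq_le_sq_mul_sq _ _ _
  have h2 : ∑ l, (∑ i, (c i) ^ 2) * (∑ i, (d i l) ^ 2)
      = (∑ i, (c i) ^ 2) * (∑ i, ∑ l, (d i l) ^ 2) := by
    rw [← Finset.mul_sum, Finset.sum_comm]
  have hc' : ∑ i, (c i) ^ 2 ≤ (m : ℝ) * ak ^ 2 := by
    calc ∑ i, (c i) ^ 2 ≤ ∑ _i : Fin m, ak ^ 2 := Finset.sum_le_sum fun i _ => hc i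
      _ = (m : ℝ) * ak ^ 2 := by simp [mul_comm]
  have hd' : ∑ i, ∑ l, (d i l) ^ 2 ≤ (m : ℝ) * S ^ 2 := by
    calc ∑ i, ∑ l, (d i l) ^ 2 ≤ ∑ _i : Fin m, S ^ 2 := Finset.sum_le_sum fun i _ => hd i
      _ = (m : ℝ) * S ^ 2 := by simp [mul_comm]
  have hcn : 0 ≤ ∑ i, (c i) ^ 2 := Finset.sum_nonneg fun i _ => sq_nonneg _
  have hdn : 0 ≤ ∑ i, ∑ l, (d i l) ^ 2 :=
    Finset.sum_nonneg fun i _ => Finset.sum_nonneg fun l _ => sq_nonneg _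
  calc ∑ l, (∑ i, c i * d i l) ^ 2
      ≤ (∑ i, (c i) ^ 2) * (∑ i, ∑ l, (d i l) ^ 2) := by rw [← h2]; exact h1
    _ ≤ ((m : ℝ) * ak ^ 2) * ((m : ℝ) * S ^ 2) :=
        mul_le_mul hc' hd' hdn (by positivity)
    _ = ((m : ℝ) * ak * S) ^ 2 := by ring

/-- **local metric equivalence, lower part.** For any two `δ`-separable
MABS parameter pairs `(F, ω)`, `(F', ω')`,
`d((F,ω),(F',ω')) ≥ ‖Fω - F'ω'‖_Frobenius / (√n · m · a_k)`. -/
theorem stmt12 {n m M : ℕ} (hn : 0 < n) (hm : 0 < m) (hM : 0 < M)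
    (𝔄 : Finset ℝ) (ak δ : ℝ) (hA : MABS.AlphOK 𝔄 ak) (hδ : 0 < δ)
    (F F' : Fin n → Fin m → ℝ) (hF : MABS.Separable 𝔄 F) (hF' : MABS.Separable 𝔄 F')
    (ω ω' : Fin m → Fin M → ℝ) (hΩ : MABS.Omega ω) (hΩ' : MABS.Omega ω')
    (hasb : δ ≤ MABS.ASB 𝔄 ω) (hasb' : δ ≤ MABS.ASB 𝔄 ω')
    (hwsb : MABS.WSBge ak δ ω) (hwsb' : MABS.WSBge ak δ ω') :
    MABS.frob F F' ω ω' / (Real.sqrt (n : ℝ) * m * ak) ≤ MABS.dmet F F' ω ω' := by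
  obtain ⟨h0A, h1A, hakA, hmaxA, hlowA⟩ := hA
  have hak1 : (1 : ℝ) ≤ ak := hmaxA 1 h1A
  have hakpos : (0 : ℝ) < ak := lt_of_lt_of_le zero_lt_one hak1
  have hnpos : (0 : ℝ) < Real.sqrt (n : ℝ) := Real.sqrt_pos.2 (by exact_mod_cast hn)
  have hm1 : (1 : ℝ) ≤ (m : ℝ) := by exact_mod_cast hm
  have hmpos : (0 : ℝ) < (m : ℝ) := lt_of_lt_of_le zero_lt_one hm1
  have hpos : 0 < Real.sqrt (n : ℝ) * m * ak := by positivity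
  rw [div_le_iff₀ hpos]
  set S := sSup (Set.range fun i : Fin m => MABS.vnorm (ω i - ω' i)) with hSdef
  have hbdd : BddAbove (Set.range fun i : Fin m => MABS.vnorm (ω i - ω' i)) :=
    (Set.finite_range _).bddAbove
  have hSle : ∀ i, MABS.vnorm (ω i - ω' i) ≤ S := fun i => le_csSup hbdd ⟨i, rfl⟩
  have hS0 : 0 ≤ S := le_trans (Real.sqrt_nonneg _) (hSle ⟨0, hm⟩)
  have hFbd : ∀ (j : Fin n) (i : Fin m), 0 ≤ F j i ∧ F j i ≤ ak := by
    intro j i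
    have hmem := hF.1 j i
    rcases hlowA _ hmem with h | h
    · exact ⟨h.ge, h ▸ hakpos.le⟩
    · exact ⟨le_trans zero_le_one h, hmaxA _ hmem⟩
  have hFbd' : ∀ (j : Fin n) (i : Fin m), 0 ≤ F' j i ∧ F' j i ≤ ak := by
    intro j i
    have hmem := hF'.1 j i
    rcases hlowA _ hmem with h | h
    · exact ⟨h.ge, h ▸ hakpos.le⟩
    · exact ⟨le_trans zero_le_one h, hmaxA _ hmem⟩
  by_cases hFF : F = F'
  · -- same design: frob ≤ √n · m · ak · S
    subst hFF
    have hdm : MABS.dmet F F ω ω' = S := by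
      simp [MABS.dmet, hSdef]
    rw [hdm]
    have hrow : ∀ i : Fin m, ∑ l, (ω i l - ω' i l) ^ 2 ≤ S ^ 2 := by
      intro i
      have h1 : MABS.vnorm (ω i - ω' i) ^ 2 ≤ S ^ 2 :=
        pow_le_pow_left₀ (Real.sqrt_nonneg _) (hSle i) 2
      have h2 : MABS.vnorm (ω i - ω' i) ^ 2 = ∑ l, (ω i l - ω' i l) ^ 2 := by
        rw [MABS.vnorm, Real.sq_sqrt (Finset.sum_nonneg fun l _ => sq_nonneg _)]
        simp [Pi.sub_apply]
      rw [h2] at h1; exact h1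
    have hj : ∀ j : Fin n, ∑ l, (MABS.mix (F j) ω l - MABS.mix (F j) ω' l) ^ 2
        ≤ ((m : ℝ) * ak * S) ^ 2 := by
      intro j
      have heq : ∀ l, MABS.mix (F j) ω l - MABS.mix (F j) ω' l
          = ∑ i, F j i * (ω i l - ω' i l) := by
        intro l
        simp [MABS.mix, mul_sub, Finset.sum_sub_distrib]
      calc ∑ l, (MABS.mix (F j) ω l - MABS.mix (F j) ω' l) ^ 2
          = ∑ l, (∑ i, F j i * (ω i l - ω' i l)) ^ 2 := by simp_rw [heq]
        _ ≤ ((m : ℝ) * ak * S) ^ 2 := by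
            refine cs_key _ _ ak S hakpos.le hS0 (fun i => ?_) hrow
            have := hFbd j i
            exact sq_le_sq' (by linarith) this.2
    have hsum : ∑ j : Fin n, ∑ l, (MABS.mix (F j) ω l - MABS.mix (F j) ω' l) ^ 2
        ≤ (n : ℝ) * ((m : ℝ) * ak * S) ^ 2 := by
      calc ∑ j : Fin n, ∑ l, (MABS.mix (F j) ω l - MABS.mix (F j) ω' l) ^ 2
          ≤ ∑ _j : Fin n, ((m : ℝ) * ak * S) ^ 2 := Finset.sum_le_sum fun j _ => hj j
        _ = (n : ℝ) * ((m : ℝ) * ak * S) ^ 2 := by simp [mul_comm]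
    calc MABS.frob F F ω ω'
        ≤ Real.sqrt ((n : ℝ) * ((m : ℝ) * ak * S) ^ 2) := Real.sqrt_le_sqrt hsum
      _ = Real.sqrt (n : ℝ) * ((m : ℝ) * ak * S) := by
          rw [Real.sqrt_mul (by positivity), Real.sqrt_sq (by positivity)]
      _ = S * (Real.sqrt (n : ℝ) * m * ak) := by ring
  · -- different designs: frob ≤ √n · √M · ak
    have hdm : MABS.dmet F F' ω ω' = Real.sqrt (M : ℝ) + S := by
      simp [MABS.dmet, hFF, hSdef]
    rw [hdm]
    have hmixbd : ∀ (e : Fin m → ℝ) (ω₀ : Fin m → Fin M → ℝ),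
        (∀ i, 0 ≤ e i ∧ e i ≤ ak) → MABS.Omega ω₀ →
        ∀ l, 0 ≤ MABS.mix e ω₀ l ∧ MABS.mix e ω₀ l ≤ ak := by
      intro e ω₀ he hΩ₀ l
      constructor
      · exact Finset.sum_nonneg fun i _ => mul_nonneg (he i).1 (hΩ₀.1 i l)
      · calc MABS.mix e ω₀ l = ∑ i, e i * ω₀ i l := rfl
          _ ≤ ∑ i, ak * ω₀ i l :=
            Finset.sum_le_sum fun i _ => mul_le_mul_of_nonneg_right (he i).2 (hΩ₀.1 i l)
          _ = ak * ∑ i, ω₀ i l := by rw [Finset.mul_sum]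
          _ = ak := by rw [hΩ₀.2.1 l, mul_one]
    have hterm : ∀ (j : Fin n) (l : Fin M),
        (MABS.mix (F j) ω l - MABS.mix (F' j) ω' l) ^ 2 ≤ ak ^ 2 := by
      intro j l
      have h1 := hmixbd (F j) ω (hFbd j) hΩ l
      have h2 := hmixbd (F' j) ω' (hFbd' j) hΩ' l
      exact sq_le_sq' (by linarith) (by linarith)
    have hsum : ∑ j : Fin n, ∑ l, (MABS.mix (F j) ω l - MABS.mix (F' j) ω' l) ^ 2
        ≤ (n : ℝ) * ((M : ℝ) * ak ^ 2) := by
      calc ∑ j : Fin n, ∑ l, (MABS.mix (F j) ω l - MABS.mix (F' j) ω' l) ^ 2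
          ≤ ∑ _j : Fin n, ∑ _l : Fin M, ak ^ 2 :=
            Finset.sum_le_sum fun j _ => Finset.sum_le_sum fun l _ => hterm j l
        _ = (n : ℝ) * ((M : ℝ) * ak ^ 2) := by simp [mul_comm, mul_assoc]
    have hfr : MABS.frob F F' ω ω' ≤ Real.sqrt (n : ℝ) * Real.sqrt (M : ℝ) * ak := by
      calc MABS.frob F F' ω ω'
          ≤ Real.sqrt ((n : ℝ) * ((M : ℝ) * ak ^ 2)) := Real.sqrt_le_sqrt hsum
        _ = Real.sqrt (n : ℝ) * (Real.sqrt (M : ℝ) * ak) := by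
            rw [Real.sqrt_mul (by positivity), Real.sqrt_mul (by positivity),
              Real.sqrt_sq hakpos.le]
        _ = Real.sqrt (n : ℝ) * Real.sqrt (M : ℝ) * ak := by ring
    have hMn : 0 ≤ Real.sqrt (M : ℝ) := Real.sqrt_nonneg _
    nlinarith [mul_pos hnpos hakpos, mul_nonneg (mul_nonneg hnpos.le hakpos.le) hS0,
      mul_nonneg (mul_nonneg (mul_nonneg hnpos.le hakpos.le) hMn) (sub_nonneg.2 hm1),
      mul_nonneg (mul_nonneg (mul_nonneg hnpos.le hakpos.le) hS0) (sub_nonneg.2 hm1)]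
end

section
/- If ω* ∈ Ω_{m,M} satisfies ASB(ω*) ≥ α and E ∈ R^{m×M} is a perturbation matrix with rows E_{i·} for i < m arbitrary with all entries bounded by ε̄ in absolute value and last row E_{m·} = −∑_{i=1}^{m−1} E_{i·}, then ASB(ω* + E) ≥ α − 2(m−1)·a_k·ε̄, provided ω* + E has nonnegative entries (which holds when ω*_{mj} ≥ (m−1)ε̄ for all j and E_{ij} ∈ [0, ε̄] for i < m). -/
open Finset Real

/-!
Write `d = e - e'` for two alphabet vectors. Since the last row of `E` is minus the sum of the
others, `(dE)_j = ∑_{i < m} (d_i - d_m) E_{ij}`, and `|d_i - d_m| ≤ 2 a_k` because the alphabet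
lies in `[0, a_k]`; hence every entry of `dE` is at most `2 (m-1) a_k ε̄` and `‖dE‖ ≤ √M` times
that. The reverse triangle inequality `‖d(ω + E)‖ ≥ ‖dω‖ - ‖dE‖` then moves the bound on `ASB`.
-/

namespace MABS

variable {m M : ℕ}

theorem vnorm_eq_norm_toLp (v : Fin M → ℝ) :
    vnorm v = ‖(WithLp.toLp 2 v : EuclideanSpace ℝ (Fin M))‖ := by
  simp [vnorm, EuclideanSpace.norm_eq]

theorem vnorm_sub_vnorm_le_vnorm_add (v w : Fin M → ℝ) : vnorm v - vnorm w ≤ vnorm (v + w) := by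
  simpa only [vnorm_eq_norm_toLp, WithLp.toLp_add] using norm_sub_le_norm_add _ _

theorem vnorm_le_sqrt_mul {v : Fin M → ℝ} {c : ℝ} (hc : 0 ≤ c) (hv : ∀ j, |v j| ≤ c) :
    vnorm v ≤ √M * c := by
  have hsq : ∑ j, v j ^ 2 ≤ M * c ^ 2 := by
    calc ∑ j, v j ^ 2 ≤ ∑ _j : Fin M, c ^ 2 :=
          sum_le_sum fun j _ => sq_le_sq' (abs_le.mp (hv j)).1 (abs_le.mp (hv j)).2
      _ = M * c ^ 2 := by simp
  calc vnorm v ≤ √(M * c ^ 2) := Real.sqrt_le_sqrt hsq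
    _ = √M * c := by rw [Real.sqrt_mul (Nat.cast_nonneg M), Real.sqrt_sq hc]

theorem mix_add_right (e : Fin m → ℝ) (ω E : Fin m → Fin M → ℝ) :
    mix e (ω + E) = mix e ω + mix e E := by
  ext j
  simp [mix, mul_add, Finset.sum_add_distrib]

theorem mix_sub_left (e e' : Fin m → ℝ) (ω : Fin m → Fin M → ℝ) :
    mix e ω - mix e' ω = mix (e - e') ω := by
  ext j
  simp [mix, sub_mul, Finset.sum_sub_distrib]

theorem mix_apply_eq_sum_erase_of_row_eq_neg_sum (d : Fin m → ℝ) {E : Fin m → Fin M → ℝ}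
    (i₀ : Fin m) (j : Fin M) (hE : E i₀ j = -∑ i ∈ univ.erase i₀, E i j) :
    mix d E j = ∑ i ∈ univ.erase i₀, (d i - d i₀) * E i j := by
  rw [mix, ← Finset.add_sum_erase _ _ (mem_univ i₀), hE, mul_neg, Finset.mul_sum,
    ← sub_eq_neg_add, ← Finset.sum_sub_distrib]
  exact Finset.sum_congr rfl fun i _ => by ring

theorem abs_mix_apply_le_of_row_eq_neg_sum {d : Fin m → ℝ} {E : Fin m → Fin M → ℝ} {a ε : ℝ}
    (i₀ : Fin m) (j : Fin M) (hE : E i₀ j = -∑ i ∈ univ.erase i₀, E i j)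
    (hd : ∀ i, |d i| ≤ a) (hEb : ∀ i ≠ i₀, |E i j| ≤ ε) :
    |mix d E j| ≤ ((m : ℝ) - 1) * (2 * a) * ε := by
  have ha : 0 ≤ a := (abs_nonneg _).trans (hd i₀)
  have hterm : ∀ i ∈ univ.erase i₀, |(d i - d i₀) * E i j| ≤ 2 * a * ε := fun i hi => by
    rw [abs_mul, two_mul]
    exact mul_le_mul ((abs_sub _ _).trans (add_le_add (hd i) (hd i₀)))
      (hEb i (ne_of_mem_erase hi)) (abs_nonneg _) (by linarith)
  have hcard : ((univ.erase i₀).card : ℝ) = (m : ℝ) - 1 := by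
    rw [card_erase_of_mem (mem_univ i₀), card_univ, Fintype.card_fin, Nat.cast_pred i₀.pos]
  rw [mix_apply_eq_sum_erase_of_row_eq_neg_sum d i₀ j hE, mul_assoc, ← hcard]
  exact (abs_sum_le_sum_abs _ _).trans ((sum_le_sum hterm).trans_eq (by simp))

theorem AlphOK.abs_sub_le {𝔄 : Finset ℝ} {ak a b : ℝ} (hA : AlphOK 𝔄 ak) (ha : a ∈ 𝔄)
    (hb : b ∈ 𝔄) : |a - b| ≤ ak := by
  obtain ⟨-, -, -, hle, hge⟩ := hA
  have hnonneg : ∀ x ∈ 𝔄, 0 ≤ x := fun x hx => by rcases hge x hx with rfl | h <;> linarith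
  exact abs_sub_le_of_nonneg_of_le (hnonneg a ha) (hle a ha) (hnonneg b hb) (hle b hb)

theorem AlphOK.exists_ne {𝔄 : Finset ℝ} {ak : ℝ} (hA : AlphOK 𝔄 ak) (hm : 0 < m) :
    ∃ e e' : Fin m → ℝ, inAlph 𝔄 e ∧ inAlph 𝔄 e' ∧ e ≠ e' :=
  ⟨fun _ => 1, fun _ => 0, fun _ => hA.2.1, fun _ => hA.1,
    fun h => by simpa using congrFun h ⟨0, hm⟩⟩

theorem ASB_le {𝔄 : Finset ℝ} {ω : Fin m → Fin M → ℝ} {e e' : Fin m → ℝ}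
    (he : inAlph 𝔄 e) (he' : inAlph 𝔄 e') (hne : e ≠ e') :
    ASB 𝔄 ω ≤ vnorm (mix e ω - mix e' ω) / √M := by
  refine csInf_le ⟨0, ?_⟩ ⟨e, e', he, he', hne, rfl⟩
  rintro _ ⟨_, _, _, _, _, rfl⟩
  exact div_nonneg (Real.sqrt_nonneg _) (Real.sqrt_nonneg _)

theorem ASB_sub_le_ASB_add {𝔄 : Finset ℝ} {ω E : Fin m → Fin M → ℝ} {C : ℝ} (hC : 0 ≤ C)
    (hne : ∃ e e' : Fin m → ℝ, inAlph 𝔄 e ∧ inAlph 𝔄 e' ∧ e ≠ e')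
    (hE : ∀ e e', inAlph 𝔄 e → inAlph 𝔄 e' → vnorm (mix (e - e') E) ≤ √M * C) :
    ASB 𝔄 ω - C ≤ ASB 𝔄 (ω + E) := by
  obtain ⟨e₀, e₀', he₀, he₀', hne₀⟩ := hne
  refine le_csInf ⟨_, e₀, e₀', he₀, he₀', hne₀, rfl⟩ ?_
  rintro _ ⟨e, e', he, he', hne, rfl⟩
  have hω := ASB_le (ω := ω) he he' hne
  rw [mix_sub_left] at hω
  have hEC : vnorm (mix (e - e') E) / √M ≤ C :=
    div_le_of_le_mul₀ (Real.sqrt_nonneg _) hC (by linarith [hE e e' he he'])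
  rw [mix_add_right, mix_add_right, add_sub_add_comm, mix_sub_left, mix_sub_left]
  calc ASB 𝔄 ω - C
      ≤ (vnorm (mix (e - e') ω) - vnorm (mix (e - e') E)) / √M := by rw [sub_div]; linarith
    _ ≤ vnorm (mix (e - e') ω + mix (e - e') E) / √M := by
        gcongr; exact vnorm_sub_vnorm_le_vnorm_add _ _

end MABS

open MABS in
theorem stmt17_general {m M : ℕ} (hm : 0 < m) (𝔄 : Finset ℝ) (ak α εb : ℝ)
    (hA : MABS.AlphOK 𝔄 ak) (hεb : 0 ≤ εb)
    (ω : Fin m → Fin M → ℝ) (hasb : α ≤ MABS.ASB 𝔄 ω)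
    (E : Fin m → Fin M → ℝ)
    (hEbd : ∀ (i : Fin m) (j : Fin M), (i : ℕ) < m - 1 → |E i j| ≤ εb)
    (hElast : ∀ j : Fin M, E ⟨m - 1, Nat.sub_lt hm Nat.one_pos⟩ j =
      -∑ i ∈ Finset.univ.filter (fun i : Fin m => (i : ℕ) < m - 1), E i j) :
    α - 2 * ((m : ℝ) - 1) * ak * εb ≤ MABS.ASB 𝔄 (ω + E) := by
  set i₀ : Fin m := ⟨m - 1, Nat.sub_lt hm Nat.one_pos⟩
  have hlast : univ.filter (fun i : Fin m => (i : ℕ) < m - 1) = univ.erase i₀ := by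
    ext i
    simp only [mem_filter, mem_univ, true_and, mem_erase, ne_eq, Fin.ext_iff, i₀, and_true]
    omega
  have hEb : ∀ j, ∀ i ≠ i₀, |E i j| ≤ εb := fun j i hi =>
    hEbd i j (lt_of_le_of_ne (Nat.le_sub_one_of_lt i.isLt) fun h => hi (Fin.ext h))
  have hC : 0 ≤ ((m : ℝ) - 1) * (2 * ak) * εb := by
    have : (1 : ℝ) ≤ m := by exact_mod_cast hm
    have : 1 ≤ ak := hA.2.2.2.1 1 hA.2.1
    positivity
  have hdE : ∀ e e', inAlph 𝔄 e → inAlph 𝔄 e' → vnorm (mix (e - e') E) ≤ √M * _ :=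
    fun e e' he he' => vnorm_le_sqrt_mul hC fun j =>
      abs_mix_apply_le_of_row_eq_neg_sum i₀ j (hlast ▸ hElast j)
        (fun i => hA.abs_sub_le (he i) (he' i)) (hEb j)
  linarith [ASB_sub_le_ASB_add (ω := ω) hC (hA.exists_ne hm) hdE]

/-- If `ω ∈ Ω_{m,M}` has `ASB(ω) ≥ α` and `E` is a perturbation with
`|E_{ij}| ≤ ε̄` for `i < m`, last row `E_{m·} = -∑_{i<m} E_{i·}`, and `ω + E` entrywise
nonnegative, then `ASB(ω + E) ≥ α - 2(m-1)·a_k·ε̄`. -/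
theorem stmt17 {m M : ℕ} (hm : 0 < m) (hM : 0 < M) (𝔄 : Finset ℝ) (ak α εb : ℝ)
    (hA : MABS.AlphOK 𝔄 ak) (hεb : 0 ≤ εb)
    (ω : Fin m → Fin M → ℝ) (hΩ : MABS.Omega ω) (hasb : α ≤ MABS.ASB 𝔄 ω)
    (E : Fin m → Fin M → ℝ)
    (hEbd : ∀ (i : Fin m) (j : Fin M), (i : ℕ) < m - 1 → |E i j| ≤ εb)
    (hElast : ∀ j : Fin M, E ⟨m - 1, Nat.sub_lt hm Nat.one_pos⟩ j =
      -∑ i ∈ Finset.univ.filter (fun i : Fin m => (i : ℕ) < m - 1), E i j)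
    (hpos : ∀ i j, 0 ≤ ω i j + E i j) :
    α - 2 * ((m : ℝ) - 1) * ak * εb ≤ MABS.ASB 𝔄 (ω + E) :=
  stmt17_general hm 𝔄 ak α εb hA hεb ω hasb E hEbd hElast
end
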